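/- arXiv:1602.00778 — 7 statements merged into one kernel-verified Lean document; each statement's English description precedes it below -/
import Mathlib

section
/- Let T be a finite set and let σ₁ and σ₂ be involutions of T such that σ₁ has exactly one fixed point a and σ₂ has exactly one fixed point b. Then a and b lie in the same cycle of the permutation σ₂ ∘ σ₁, i.e., there exists an integer m with (σ₂ ∘ σ₁)^m(a) = b. -/
open Finset in
lemma even_card_of_invol {α : Type*} [DecidableEq α] (f : α → α)
    (hf : ∀ x, f (f x) = x) :
    ∀ s : Finset α, (∀ x ∈ s, f x ∈ s) → (∀ x ∈ s, f x ≠ x) → Even s.card := by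
  intro s
  induction s using Finset.strongInduction with
  | _ s ih =>
    intro hclosed hnofix
    rcases s.eq_empty_or_nonempty with rfl | ⟨x, hx⟩
    · simp
    · have hfx : f x ∈ s := hclosed x hx
      have hne : f x ≠ x := hnofix x hx
      set t := (s.erase x).erase (f x) with ht
      have htsub : t ⊂ s := by
        apply Finset.ssubset_of_subset_of_ssubset
        · exact Finset.erase_subset _ _
        · exact Finset.erase_ssubset hx
      have hcard : t.card + 2 = s.card := by
        rw [ht, Finset.card_erase_of_mem (Finset.mem_erase.2 ⟨hne, hfx⟩),
          Finset.card_erase_of_mem hx]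
        have : 1 ≤ s.card := Finset.card_pos.2 ⟨x, hx⟩
        have h2 : 2 ≤ s.card := by
          refine Finset.one_lt_card.2 ⟨x, hx, f x, hfx, (Ne.symm hne)⟩
        omega
      have hclosed' : ∀ y ∈ t, f y ∈ t := by
        intro y hy
        have hy1 : y ≠ f x := (Finset.mem_erase.1 hy).1
        have hy2 : y ≠ x := (Finset.mem_erase.1 (Finset.mem_erase.1 hy).2).1
        have hys : y ∈ s := (Finset.mem_erase.1 (Finset.mem_erase.1 hy).2).2
        refine Finset.mem_erase.2 ⟨?_, Finset.mem_erase.2 ⟨?_, hclosed y hys⟩⟩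
        · intro h; apply hy2; have := congrArg f h; rwa [hf, hf] at this
        · intro h; apply hy1; have := congrArg f h; rwa [hf] at this
      have hnofix' : ∀ y ∈ t, f y ≠ y := fun y hy =>
        hnofix y (Finset.mem_erase.1 (Finset.mem_erase.1 hy).2).2
      obtain ⟨k, hk⟩ := ih t htsub hclosed' hnofix'
      exact ⟨k + 1, by omega⟩

/-- If `σ₁`, `σ₂` are involutions of a finite set `T` with unique fixed
points `a` and `b` respectively, then `a` and `b` lie in the same cycle of `σ₂ ∘ σ₁`. -/
theorem stmt_1 {T : Type*} [Fintype T] (σ₁ σ₂ : Equiv.Perm T) (a b : T)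
    (h1 : σ₁ * σ₁ = 1) (h2 : σ₂ * σ₂ = 1)
    (ha : ∀ x, σ₁ x = x ↔ x = a) (hb : ∀ x, σ₂ x = x ↔ x = b) :
    ∃ m : ℤ, ((σ₂ * σ₁) ^ m) a = b := by
  classical
  set π := σ₂ * σ₁ with hπ
  have h1inv : σ₁⁻¹ = σ₁ := by
    rw [inv_eq_iff_mul_eq_one]; exact h1
  have h2inv : σ₂⁻¹ = σ₂ := by
    rw [inv_eq_iff_mul_eq_one]; exact h2
  have hsc : SemiconjBy σ₁ π π⁻¹ := by
    show σ₁ * π = π⁻¹ * σ₁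
    rw [hπ, mul_inv_rev, h1inv, h2inv, ← mul_assoc]

  have hconj : ∀ m : ℤ, σ₁ * π ^ m * σ₁ = π ^ (-m) := by
    intro m
    have := (hsc.zpow_right m).eq
    rw [inv_zpow, ← zpow_neg] at this
    calc σ₁ * π ^ m * σ₁ = π ^ (-m) * σ₁ * σ₁ := by rw [this]
      _ = π ^ (-m) * (σ₁ * σ₁) := by rw [mul_assoc]
      _ = π ^ (-m) := by rw [h1, mul_one]
  have hσ1a : σ₁ a = a := (ha a).2 rfl
  -- orbit of a
  set S : Finset T := Finset.univ.filter (fun x => π.SameCycle a x) with hS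
  have haS : a ∈ S := by
    simp [hS, Equiv.Perm.SameCycle.refl]
  have hmemS : ∀ x, x ∈ S ↔ π.SameCycle a x := by
    intro x; simp [hS]
  -- σ₁ maps S to S
  have hσ1S : ∀ x ∈ S, σ₁ x ∈ S := by
    intro x hx
    obtain ⟨m, hm⟩ := (hmemS x).1 hx
    refine (hmemS _).2 ⟨-m, ?_⟩
    have : σ₁ x = (π ^ (-m)) a := by
      rw [← hm, ← hconj m]
      simp [Equiv.Perm.mul_apply, hσ1a]
    rw [this]
  have hπS : ∀ x ∈ S, π x ∈ S := by
    intro x hx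
    obtain ⟨m, hm⟩ := (hmemS x).1 hx
    refine (hmemS _).2 ⟨m + 1, ?_⟩
    rw [← hm, ← Equiv.Perm.mul_apply, ← zpow_one_add, add_comm]
  have hσ2eq : σ₂ = π * σ₁ := by
    rw [hπ, mul_assoc, h1, mul_one]
  have hσ2S : ∀ x ∈ S, σ₂ x ∈ S := by
    intro x hx
    rw [hσ2eq]
    exact hπS _ (hσ1S x hx)
  -- involutivity as functions
  have hinv1 : ∀ x, σ₁ (σ₁ x) = x := by
    intro x
    have := congrArg (fun p : Equiv.Perm T => p x) h1
    simpa [Equiv.Perm.mul_apply] using this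
  have hinv2 : ∀ x, σ₂ (σ₂ x) = x := by
    intro x
    have := congrArg (fun p : Equiv.Perm T => p x) h2
    simpa [Equiv.Perm.mul_apply] using this
  -- show b ∈ S by contradiction
  by_contra hcon
  have hbS : b ∉ S := by
    intro hbS
    obtain ⟨m, hm⟩ := (hmemS b).1 hbS
    exact hcon ⟨m, hm⟩
  -- σ₂ fixed-point-free on S
  have heven : Even S.card := by
    apply even_card_of_invol σ₂ hinv2 S hσ2S
    intro x hx hfix
    exact hbS (((hb x).1 hfix) ▸ hx)
  -- σ₁ on S.erase a : fixed-point-free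
  have hodd : Even (S.erase a).card := by
    apply even_card_of_invol σ₁ hinv1
    · intro x hx
      have hxS : x ∈ S := Finset.mem_of_mem_erase hx
      have hxa : x ≠ a := Finset.ne_of_mem_erase hx
      refine Finset.mem_erase.2 ⟨?_, hσ1S x hxS⟩
      intro h
      apply hxa
      have := congrArg σ₁ h
      rw [hinv1, hσ1a] at this
      exact this
    · intro x hx hfix
      exact Finset.ne_of_mem_erase hx ((ha x).1 hfix)
  have hcard : (S.erase a).card + 1 = S.card := by
    rw [Finset.card_erase_of_mem haS]
    have : 1 ≤ S.card := Finset.card_pos.2 ⟨a, haS⟩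
    omega
  obtain ⟨k, hk⟩ := heven
  obtain ⟨l, hl⟩ := hodd
  omega
end

section
/- Let T be a finite set, let σ₁ and σ₂ be involutions of T with unique fixed points a and b respectively, and let x ∉ T. Define involutions σ₁′ and σ₂′ on T ∪ {x} by: σ₁′ agrees with σ₁ on T ∖ {a}, σ₁′(a) = x, σ₁′(x) = a; and σ₂′ agrees with σ₂ on T ∖ {b}, σ₂′(b) = x, σ₂′(x) = b. Then C(σ₁′ ∘ σ₂′) = C(σ₁ ∘ σ₂) + 1. -/
/-!
Write `σ = σ₁ * σ₂`, let `σ̂` be the extension of a permutation `σ` of `T` fixing the new point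
`x`, and `(u v)` the transposition. Then `σ₁' = (x a) σ̂₁` and `σ₂' = σ̂₂ (x b)`, so `σ₁' σ₂'` is
conjugate to `σ̂ (x b) (x a)`. Right multiplication by `(u v)` merges the cycles of `u` and `v` if
they differ and splits their common cycle otherwise. The first transposition joins the fixed point
`x` to the cycle of `b`; the second one splits that cycle, because `a` and `b` lie in the same cycle
of `σ`: that cycle is stable under both involutions (each conjugates `σ` to `σ⁻¹`), `σ₁` fixes only
`a` on it so it has odd length, hence `σ₂` has a fixed point on it too, and that point is `b`.
-/

/-- Number of cycles of a permutation of a finite set, fixed points counting as 1-cycles. -/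
def cycleCount {α : Type*} [Fintype α] [DecidableEq α] (π : Equiv.Perm α) : ℕ :=
  π.cycleType.card + (Finset.univ.filter fun x => π x = x).card

open Equiv Equiv.Perm Finset

section Option

variable {α : Type*}

theorem Equiv.optionCongr_eq_extendDomain (π : Perm α) :
    optionCongr π = π.extendDomain (optionIsSomeEquiv α).symm := by
  refine Equiv.ext fun o => ?_
  cases o with
  | none => simp [extendDomain_apply_not_subtype]
  | some z => exact (extendDomain_apply_image π (optionIsSomeEquiv α).symm z).symm

theorem Equiv.optionCongr_mul (f g : Perm α) :
    optionCongr (f * g) = optionCongr f * optionCongr g := by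
  ext (_ | z) <;> simp

theorem Equiv.Perm.SameCycle.optionCongr {π : Perm α} {u v : α} (h : π.SameCycle u v) :
    SameCycle (optionCongr π) (some u) (some v) := by
  rw [optionCongr_eq_extendDomain]
  exact h.extendDomain

end Option

section CycleType

variable {α : Type*} [Fintype α] [DecidableEq α]

theorem cycleCount_eq_card_cycleType_add (π : Perm α) :
    cycleCount π = Multiset.card π.cycleType + (Fintype.card α - π.cycleType.sum) := by
  have hfix : univ.filter (fun x => π x = x) = π.supportᶜ := by
    ext; simp [mem_support]
  rw [cycleCount, hfix, card_compl, sum_cycleType]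

theorem cycleCount_mul_comm (f g : Perm α) : cycleCount (f * g) = cycleCount (g * f) := by
  rw [cycleCount_eq_card_cycleType_add, cycleCount_eq_card_cycleType_add,
    ← cycleType_conj (τ := f⁻¹) (σ := f * g), inv_mul_cancel_left, inv_inv]

theorem cycleCount_optionCongr (π : Perm α) :
    cycleCount (optionCongr π) = cycleCount π + 1 := by
  have := π.sum_cycleType_le
  rw [cycleCount_eq_card_cycleType_add, cycleCount_eq_card_cycleType_add,
    optionCongr_eq_extendDomain, cycleType_extendDomain, Fintype.card_option]
  omega

end CycleType

theorem not_two_dvd_card_of_involution {β : Type*} [Fintype β] [DecidableEq β] {σ : Perm β}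
    (hσ : σ * σ = 1) {c : β} (hc : ∀ y, σ y = y ↔ y = c) : ¬ 2 ∣ Fintype.card β := by
  have hfix : σ.supportᶜ = {c} := by
    ext; simp [mem_support, hc]
  have := card_compl_support_modEq (p := 2) (n := 1) (σ := σ) (by rw [pow_one, sq, hσ])
  rw [hfix, card_singleton, Nat.ModEq] at this
  omega

namespace Equiv.Perm

variable {α : Type*}

theorem not_sameCycle_of_pow_apply_self [Finite α] {f : Perm α} {z w : α} {k : ℕ} (hk : 0 < k)
    (hper : (f ^ k) z = z) (havoid : ∀ j < k, (f ^ j) z ≠ w) : ¬ f.SameCycle z w := by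
  intro h
  obtain ⟨i, rfl⟩ := h.exists_nat_pow_eq
  refine havoid (i % k) (Nat.mod_lt i hk) ?_
  conv_rhs => rw [← Nat.mod_add_div i k, pow_add, pow_mul, Perm.mul_apply,
    (show Function.IsFixedPt (f ^ k) z from hper).perm_pow]

theorem SameCycle.eq_of_apply_eq [Finite α] {β : Type*} {f : Perm α} {g : α → β}
    (hg : ∀ w, g (f w) = g w) {u v : α} (h : f.SameCycle u v) : g u = g v := by
  obtain ⟨i, rfl⟩ := h.exists_nat_pow_eq
  clear h
  induction i with
  | zero => rfl
  | succ i ih => rw [pow_succ', Perm.mul_apply, hg, ih]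

theorem SameCycle.apply_of_conj_eq_inv {π g : Perm α} {x y : α} (hg : g * π * g⁻¹ = π⁻¹)
    (hx : π.SameCycle x (g x)) (h : π.SameCycle x y) : π.SameCycle x (g y) :=
  hx.trans (sameCycle_inv.mp (hg ▸ h.conj))

theorem sameCycle_apply_iff_of_conj_eq_inv {π g : Perm α} {x : α} (hg2 : g * g = 1)
    (hg : g * π * g⁻¹ = π⁻¹) (hx : π.SameCycle x (g x)) (y : α) :
    π.SameCycle x (g y) ↔ π.SameCycle x y := by
  refine ⟨fun h => ?_, SameCycle.apply_of_conj_eq_inv hg hx⟩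
  simpa [← Perm.mul_apply, hg2] using SameCycle.apply_of_conj_eq_inv hg hx h

variable [DecidableEq α]

theorem mul_swap_pow_apply_left {π : Perm α} {x y : α} {k : ℕ} (hk : 0 < k)
    (hfirst : ∀ j, 0 < j → j < k → (π ^ j) y ≠ x ∧ (π ^ j) y ≠ y) :
    ((π * swap x y) ^ k) x = (π ^ k) y := by
  induction k with
  | zero => omega
  | succ k ih =>
    rcases Nat.eq_zero_or_pos k with rfl | hk0
    · simp
    · obtain ⟨hx, hy⟩ := hfirst k hk0 k.lt_succ_self
      rw [pow_succ', Perm.mul_apply, ih hk0 fun j hj hjk => hfirst j hj (by omega),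
        Perm.mul_apply, swap_apply_of_ne_of_ne hx hy, ← Perm.mul_apply, ← pow_succ']

theorem sameCycle_mul_swap_iff [Fintype α] {π : Perm α} {x y : α} (hxy : x ≠ y) :
    (π * swap x y).SameCycle x y ↔ ¬ π.SameCycle x y := by
  -- `k` is the first positive time at which the `π`-orbit of `y` meets `{x, y}`; until then the
  -- orbit of `x` under `π * swap x y` follows it (`mul_swap_pow_apply_left`).
  have hex : ∃ k, 0 < k ∧ ((π ^ k) y = x ∨ (π ^ k) y = y) :=
    ⟨orderOf π, orderOf_pos π, Or.inr (by rw [pow_orderOf_eq_one, one_apply])⟩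
  set k := Nat.find hex
  obtain ⟨hk, hkxy⟩ := Nat.find_spec hex
  have hfirst : ∀ j, 0 < j → j < k → (π ^ j) y ≠ x ∧ (π ^ j) y ≠ y := fun j hj hjk =>
    not_or.mp fun h => Nat.find_min hex hjk ⟨hj, h⟩
  rcases hkxy with hkx | hky
  · -- the cycle of `x` under `π * swap x y` closes up at time `k` without meeting `y`
    refine iff_of_false (not_sameCycle_of_pow_apply_self hk ?_ fun j hjk => ?_)
      (not_not.mpr (SameCycle.symm ⟨k, by rw [zpow_natCast, hkx]⟩))
    · rw [mul_swap_pow_apply_left hk hfirst, hkx]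
    · rcases Nat.eq_zero_or_pos j with rfl | hj
      · exact hxy
      · rw [mul_swap_pow_apply_left hj fun i hi hij => hfirst i hi (by omega)]
        exact (hfirst j hj hjk).2
  · refine iff_of_true ⟨k, by rw [zpow_natCast, mul_swap_pow_apply_left hk hfirst, hky]⟩ ?_
    intro h
    refine not_sameCycle_of_pow_apply_self hk hky (fun j hjk => ?_) h.symm
    rcases Nat.eq_zero_or_pos j with rfl | hj
    · exact hxy.symm
    · exact (hfirst j hj hjk).1

section Orbits

variable [Fintype α]

def cycleOrbit (π : Perm α) (z : α) : Finset α := univ.filter (π.SameCycle z)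

def cycleOrbits (π : Perm α) : Finset (Finset α) := univ.image π.cycleOrbit

@[simp]
theorem mem_cycleOrbit {π : Perm α} {z w : α} : w ∈ π.cycleOrbit z ↔ π.SameCycle z w := by
  simp [cycleOrbit]

theorem mem_cycleOrbit_self (π : Perm α) (z : α) : z ∈ π.cycleOrbit z :=
  mem_cycleOrbit.2 .rfl

theorem cycleOrbit_eq_iff {π : Perm α} {u v : α} :
    π.cycleOrbit u = π.cycleOrbit v ↔ π.SameCycle u v := by
  refine ⟨fun h => mem_cycleOrbit.1 (h ▸ mem_cycleOrbit_self π v), fun h => ?_⟩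
  ext w
  simp only [mem_cycleOrbit]
  exact ⟨h.symm.trans, h.trans⟩

def gluedOrbit (π : Perm α) (x y z : α) : Finset α :=
  if z ∈ π.cycleOrbit x ∪ π.cycleOrbit y then π.cycleOrbit x ∪ π.cycleOrbit y
  else π.cycleOrbit z

theorem mem_gluedOrbit_self (π : Perm α) (x y z : α) : z ∈ π.gluedOrbit x y z := by
  unfold gluedOrbit
  split_ifs with h
  exacts [h, mem_cycleOrbit_self π z]

theorem gluedOrbit_of_sameCycle {π : Perm α} {x y : α} (h : π.SameCycle x y) :
    π.gluedOrbit x y = π.cycleOrbit := by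
  ext1 z
  rw [gluedOrbit, cycleOrbit_eq_iff.2 h, union_self]
  split_ifs with hz
  · exact cycleOrbit_eq_iff.2 (mem_cycleOrbit.1 hz)
  · rfl

theorem gluedOrbit_mul_swap_apply (π : Perm α) (x y w : α) :
    π.gluedOrbit x y ((π * swap x y) w) = π.gluedOrbit x y w := by
  have hπ : ∀ z, π.cycleOrbit (π z) = π.cycleOrbit z := fun z =>
    cycleOrbit_eq_iff.2 (sameCycle_apply_left.2 .rfl)
  rw [Perm.mul_apply]
  by_cases hwx : w = x
  · subst hwx
    simp [gluedOrbit, swap_apply_left, sameCycle_apply_right, SameCycle.rfl]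
  by_cases hwy : w = y
  · subst hwy
    simp [gluedOrbit, swap_apply_right, sameCycle_apply_right, SameCycle.rfl]
  simp only [gluedOrbit, swap_apply_of_ne_of_ne hwx hwy, mem_union, mem_cycleOrbit,
    sameCycle_apply_right, hπ]

theorem sameCycle_mul_swap_of_not_sameCycle {π : Perm α} {x y : α} (hxy : ¬ π.SameCycle x y) :
    (π * swap x y).SameCycle x y :=
  (sameCycle_mul_swap_iff (by rintro rfl; exact hxy .rfl)).2 hxy

-- `π = (π * swap x y) * swap x y`, so each cycle of `π` lies in a glued orbit of `π * swap x y`,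
-- and these are plain orbits because `x` and `y` share a cycle of `π * swap x y`.
theorem SameCycle.mul_swap {π : Perm α} {x y u v : α} (hxy : ¬ π.SameCycle x y)
    (h : π.SameCycle u v) : (π * swap x y).SameCycle u v := by
  have := SameCycle.eq_of_apply_eq (gluedOrbit_mul_swap_apply (π * swap x y) x y)
    (show (π * swap x y * swap x y).SameCycle u v by rwa [mul_swap_mul_self])
  rwa [gluedOrbit_of_sameCycle (sameCycle_mul_swap_of_not_sameCycle hxy), cycleOrbit_eq_iff] at this

theorem cycleOrbit_mul_swap {π : Perm α} {x y : α} (hxy : ¬ π.SameCycle x y) :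
    cycleOrbit (π * swap x y) = π.gluedOrbit x y := by
  ext1 z
  ext w
  rw [mem_cycleOrbit]
  constructor
  · intro h
    exact (SameCycle.eq_of_apply_eq (gluedOrbit_mul_swap_apply π x y) h) ▸
      mem_gluedOrbit_self π x y w
  · have hglued :
        ∀ u ∈ π.cycleOrbit x ∪ π.cycleOrbit y, (π * swap x y).SameCycle x u := by
      simp only [mem_union, mem_cycleOrbit]
      rintro u (hu | hu)
      exacts [hu.mul_swap hxy, (sameCycle_mul_swap_of_not_sameCycle hxy).trans (hu.mul_swap hxy)]
    unfold gluedOrbit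
    split_ifs with hz
    · exact fun hw => (hglued z hz).symm.trans (hglued w hw)
    · exact fun hw => (mem_cycleOrbit.1 hw).mul_swap hxy

theorem card_cycleOrbits_mul_swap {π : Perm α} {x y : α} (hxy : ¬ π.SameCycle x y) :
    #(π * swap x y).cycleOrbits + 1 = #π.cycleOrbits := by
  set U := π.cycleOrbit x ∪ π.cycleOrbit y
  have hne : π.cycleOrbit x ≠ π.cycleOrbit y := mt cycleOrbit_eq_iff.1 hxy
  have hpair : {π.cycleOrbit x, π.cycleOrbit y} ⊆ π.cycleOrbits := by
    simp [insert_subset_iff, cycleOrbits]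
  have hU : U ∉ π.cycleOrbits \ {π.cycleOrbit x, π.cycleOrbit y} := by
    simp only [cycleOrbits, mem_sdiff, mem_image, mem_univ, true_and, not_and, not_not,
      forall_exists_index]
    rintro z hz
    have hzx : π.SameCycle z x :=
      mem_cycleOrbit.1 (hz ▸ mem_union_left _ (mem_cycleOrbit_self π x))
    have hzy : π.SameCycle z y :=
      mem_cycleOrbit.1 (hz ▸ mem_union_right _ (mem_cycleOrbit_self π y))
    exact absurd (hzx.symm.trans hzy) hxy
  have himage : (π * swap x y).cycleOrbits =
      insert U (π.cycleOrbits \ {π.cycleOrbit x, π.cycleOrbit y}) := by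
    have hmemU : ∀ z,
        z ∈ U ↔ π.cycleOrbit z = π.cycleOrbit x ∨ π.cycleOrbit z = π.cycleOrbit y := by
      simp [U, cycleOrbit_eq_iff, sameCycle_comm]
    ext s
    simp only [cycleOrbits, cycleOrbit_mul_swap hxy, mem_insert, mem_sdiff, mem_image, mem_univ,
      true_and, mem_insert, mem_singleton]
    constructor
    · rintro ⟨z, rfl⟩
      by_cases hz : z ∈ U
      · exact .inl (if_pos hz)
      · rw [gluedOrbit, if_neg hz]
        exact .inr ⟨⟨z, rfl⟩, (hmemU z).not.1 hz⟩
    · rintro (rfl | ⟨⟨z, rfl⟩, hz⟩)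
      · exact ⟨x, if_pos (mem_union_left _ (mem_cycleOrbit_self π x))⟩
      · exact ⟨z, if_neg ((hmemU z).not.2 hz)⟩
  rw [himage, card_insert_of_notMem hU, card_sdiff_of_subset hpair, card_pair hne]
  have := card_le_card hpair
  rw [card_pair hne] at this
  omega

theorem cycleOrbit_of_apply_ne {π : Perm α} {z : α} (h : π z ≠ z) :
    π.cycleOrbit z = (π.cycleOf z).support := by
  ext w
  rw [mem_cycleOrbit, mem_support_cycleOf_iff' h]

theorem cycleFactorsFinset_eq_image_cycleOf (π : Perm α) :
    π.cycleFactorsFinset = π.support.image π.cycleOf := by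
  ext c
  rw [mem_image]
  constructor
  · intro hc
    obtain ⟨z, hz⟩ := (mem_cycleFactorsFinset_iff.1 hc).1.nonempty_support
    exact ⟨z, mem_cycleFactorsFinset_support_le hc hz, (cycle_is_cycleOf hz hc).symm⟩
  · rintro ⟨z, hz, rfl⟩
    exact cycleOf_mem_cycleFactorsFinset_iff.2 hz

theorem card_image_cycleOrbit_support (π : Perm α) :
    #(π.support.image π.cycleOrbit) = Multiset.card π.cycleType := by
  have hinj : Set.InjOn support (π.cycleFactorsFinset : Set (Perm α)) := by
    intro c hc d hd hcd
    obtain ⟨z, hz⟩ := (mem_cycleFactorsFinset_iff.1 hc).1.nonempty_support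
    rw [cycle_is_cycleOf hz hc, cycle_is_cycleOf (hcd ▸ hz) hd]
  have himage : π.support.image π.cycleOrbit = π.cycleFactorsFinset.image support := by
    rw [cycleFactorsFinset_eq_image_cycleOf, image_image]
    exact image_congr fun z hz => cycleOrbit_of_apply_ne (mem_support.1 hz)
  rw [himage, card_image_of_injOn hinj, cycleType_def, Multiset.card_map, card_def]

theorem cycleCount_eq_card_cycleOrbits (π : Perm α) : cycleCount π = #π.cycleOrbits := by
  set F := univ.filter fun z => π z = z
  have hsplit : π.cycleOrbits = π.support.image π.cycleOrbit ∪ F.image π.cycleOrbit := by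
    rw [cycleOrbits, ← image_union]
    congr 1
    ext z
    simp [F, mem_support, em']
  have hdisj : _root_.Disjoint (π.support.image π.cycleOrbit) (F.image π.cycleOrbit) := by
    simp only [disjoint_left, mem_image, mem_support, F, mem_filter, mem_univ, true_and]
    rintro _ ⟨z, hz, rfl⟩ ⟨w, hw, hwz⟩
    exact hz ((cycleOrbit_eq_iff.1 hwz).apply_eq_self_iff.1 hw)
  have hfixed : #(F.image π.cycleOrbit) = #F :=
    card_image_of_injOn fun z hz w _ hzw => (cycleOrbit_eq_iff.1 hzw).eq_of_left (mem_filter.1 hz).2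
  rw [cycleCount, hsplit, card_union_of_disjoint hdisj, card_image_cycleOrbit_support, hfixed]

theorem cycleCount_mul_swap_of_not_sameCycle {π : Perm α} {x y : α} (h : ¬ π.SameCycle x y) :
    cycleCount (π * swap x y) + 1 = cycleCount π := by
  rw [cycleCount_eq_card_cycleOrbits, cycleCount_eq_card_cycleOrbits, card_cycleOrbits_mul_swap h]

theorem cycleCount_mul_swap_of_sameCycle {π : Perm α} {x y : α} (hxy : x ≠ y)
    (h : π.SameCycle x y) : cycleCount (π * swap x y) = cycleCount π + 1 := by
  have := cycleCount_mul_swap_of_not_sameCycle fun h' => (sameCycle_mul_swap_iff hxy).1 h' h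
  rwa [mul_swap_mul_self, eq_comm] at this

end Orbits

theorem sameCycle_mul_of_involutions [Fintype α] {σ₁ σ₂ : Perm α}
    (h1 : σ₁ * σ₁ = 1) (h2 : σ₂ * σ₂ = 1) {a b : α}
    (ha : ∀ y, σ₁ y = y ↔ y = a) (hb : ∀ y, σ₂ y = y → y = b) :
    (σ₁ * σ₂).SameCycle a b := by
  set π := σ₁ * σ₂
  have e1 : σ₁⁻¹ = σ₁ := inv_eq_of_mul_eq_one_right h1
  have e2 : σ₂⁻¹ = σ₂ := inv_eq_of_mul_eq_one_right h2
  have hπinv : π⁻¹ = σ₂ * σ₁ := by rw [mul_inv_rev, e1, e2]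
  have hconj1 : σ₁ * π * σ₁⁻¹ = π⁻¹ := by
    rw [hπinv, e1, ← mul_assoc, h1, one_mul]
  have hconj2 : σ₂ * π * σ₂⁻¹ = π⁻¹ := by
    rw [hπinv, e2, mul_assoc, mul_assoc, h2, mul_one]
  have hσ1a : σ₁ a = a := (ha a).2 rfl
  -- `σ₂ a = π⁻¹ a`
  have hσ2a : π.SameCycle a (σ₂ a) := by
    rw [← sameCycle_apply_right]
    simp [π, ← Perm.mul_apply σ₂ σ₂, h2, hσ1a, SameCycle.rfl]
  -- On the cycle of `a`, `σ₁` fixes only `a`, so that cycle has odd length and `σ₂` fixes a point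
  -- of it.
  let τ₁ := σ₁.subtypePerm (sameCycle_apply_iff_of_conj_eq_inv h1 hconj1 (by rw [hσ1a]))
  let τ₂ := σ₂.subtypePerm (sameCycle_apply_iff_of_conj_eq_inv h2 hconj2 hσ2a)
  have hτ₁ : τ₁ * τ₁ = 1 := by ext; simp [τ₁, h1]
  have hτ₂ : τ₂ ^ 2 ^ 1 = 1 := by ext; simp [τ₂, sq, h2]
  have hodd := not_two_dvd_card_of_involution hτ₁ (c := ⟨a, .refl π a⟩)
    (fun y => by simp [τ₁, Subtype.ext_iff, ha])
  obtain ⟨⟨z, hz⟩, hfix⟩ := exists_fixed_point_of_prime hodd hτ₂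
  rwa [hb z (by simpa [τ₂, Subtype.ext_iff] using hfix)] at hz

end Equiv.Perm

section OptionExtension

variable {α : Type*} [DecidableEq α]

theorem eq_swap_mul_optionCongr {σ : Perm α} {σ' : Perm (Option α)} {a : α} (hσa : σ a = a)
    (h' : ∀ y, y ≠ a → σ' (some y) = some (σ y)) (ha : σ' (some a) = none)
    (hx : σ' none = some a) : σ' = swap none (some a) * optionCongr σ := by
  refine Equiv.ext fun o => ?_
  rcases o with _ | y
  · simp [hx]
  by_cases hy : y = a
  · subst hy
    simp [ha, hσa]
  · have hσy : σ y ≠ a := fun h => hy (σ.injective (h.trans hσa.symm))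
    simp [h' y hy, swap_apply_of_ne_of_ne, hσy]

theorem eq_optionCongr_mul_swap {σ : Perm α} {σ' : Perm (Option α)} {a : α} (hσa : σ a = a)
    (h' : ∀ y, y ≠ a → σ' (some y) = some (σ y)) (ha : σ' (some a) = none)
    (hx : σ' none = some a) : σ' = optionCongr σ * swap none (some a) := by
  have hnone : (optionCongr σ).symm none = none := (optionCongr σ).symm_apply_eq.2 rfl
  have hsome : (optionCongr σ).symm (some a) = some a :=
    (optionCongr σ).symm_apply_eq.2 (by simp [hσa])
  rw [eq_swap_mul_optionCongr hσa h' ha hx, swap_mul_eq_mul_swap, Perm.inv_def, hnone, hsome]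

end OptionExtension

/-- Let `σ₁, σ₂` be involutions of a finite set `T` with unique fixed
points `a`, `b`, and let `x ∉ T` (modelled by `none` in `Option T`).  Extend them to
involutions `σ₁', σ₂'` of `T ∪ {x}` by `σ₁'(a) = x, σ₁'(x) = a` and `σ₂'(b) = x,
σ₂'(x) = b`.  Then `C(σ₁' ∘ σ₂') = C(σ₁ ∘ σ₂) + 1`. -/
theorem stmt_2 {T : Type*} [Fintype T] [DecidableEq T]
    (σ₁ σ₂ : Equiv.Perm T) (a b : T)
    (h1 : σ₁ * σ₁ = 1) (h2 : σ₂ * σ₂ = 1)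
    (ha : ∀ y, σ₁ y = y ↔ y = a) (hb : ∀ y, σ₂ y = y ↔ y = b)
    (σ₁' σ₂' : Equiv.Perm (Option T))
    (h1' : ∀ y : T, y ≠ a → σ₁' (some y) = some (σ₁ y))
    (h1a : σ₁' (some a) = none) (h1x : σ₁' none = some a)
    (h2' : ∀ y : T, y ≠ b → σ₂' (some y) = some (σ₂ y))
    (h2b : σ₂' (some b) = none) (h2x : σ₂' none = some b) :
    cycleCount (σ₁' * σ₂') = cycleCount (σ₁ * σ₂) + 1 := by
  have hσ₁a : σ₁ a = a := (ha a).2 rfl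
  have hσ₂b : σ₂ b = b := (hb b).2 rfl
  set π : Perm (Option T) := optionCongr (σ₁ * σ₂)
  have hprod : cycleCount (σ₁' * σ₂') =
      cycleCount (π * swap none (some b) * swap none (some a)) := by
    rw [eq_swap_mul_optionCongr hσ₁a h1' h1a h1x, eq_optionCongr_mul_swap hσ₂b h2' h2b h2x,
      mul_assoc, cycleCount_mul_comm, ← mul_assoc (optionCongr σ₁), ← optionCongr_mul]
  have hnone : ¬ π.SameCycle none (some b) := fun h =>
    Option.some_ne_none b (h.eq_of_left rfl).symm
  have hab : (π * swap none (some b)).SameCycle none (some a) :=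
    (sameCycle_mul_swap_of_not_sameCycle hnone).trans
      ((sameCycle_mul_of_involutions h1 h2 ha fun y => (hb y).1).symm.optionCongr.mul_swap hnone)
  rw [hprod, cycleCount_mul_swap_of_sameCycle (Option.some_ne_none a).symm hab,
    cycleCount_mul_swap_of_not_sameCycle hnone, cycleCount_optionCongr]
end

section
/- Let n ≥ 1 and let a = a₁a₂⋯aₙ be a signed permutation on [n]. Let p be the (2n+1)-cycle (0, −1, −2, …, −n, n, n−1, …, 1) on [n]± and let s̃ = s̃(a) be the (2n+1)-cycle (0, a₁, …, aₙ, −aₙ, …, −a₁) on [n]±. On the set [n]± ∪ {−(n+1)}, let θ₂ be the fixed-point-free involution (0, −1)(1, −2)⋯(n, −n−1), and let θ₁ be the fixed-point-free involution (b₀, b₁)(b₂, b₃)⋯(b_{2n}, b_{2n+1}), where the sequence b = b₀b₁⋯b_{2n+1} is given by b₀ = 0, b_{2k−1} = −a_k and b_{2k} = a_k for 1 ≤ k ≤ n, and b_{2n+1} = −(n+1). Then C(p ∘ s̃) = C(θ₁ ∘ θ₂) − 1. -/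
/-- The set `[n]± = {-n, …, -1, 0, 1, …, n}` of integers. -/
abbrev Ipm (n : ℕ) : Type := {j : ℤ // j ∈ Finset.Icc (-(n : ℤ)) (n : ℤ)}

/-- The set `[n]± ∪ {-(n+1)} = {-(n+1), -n, …, -1, 0, 1, …, n}` of integers. -/
abbrev Jpm (n : ℕ) : Type := {j : ℤ // j ∈ Finset.Icc (-(n : ℤ) - 1) (n : ℤ)}

/-- The sequence `s = 0, a₁, …, aₙ, -aₙ, …, -a₁` (indices `0, …, 2n`). -/
def seq (n : ℕ) (a : ℕ → ℤ) (k : ℕ) : ℤ :=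
  if k = 0 then 0 else if k ≤ n then a k else -a (2 * n + 1 - k)

/-- The sequence `b = b₀, …, b_{2n+1}` with `b₀ = 0`, `b_{2k-1} = -a_k`, `b_{2k} = a_k`
for `1 ≤ k ≤ n`, and `b_{2n+1} = -(n+1)`. -/
def bseq (n : ℕ) (a : ℕ → ℤ) (k : ℕ) : ℤ :=
  if k = 0 then 0
  else if k = 2 * n + 1 then -((n : ℤ) + 1)
  else if k % 2 = 1 then -a ((k + 1) / 2)
  else a (k / 2)

/-- `a₁, …, aₙ` is a signed permutation on `[n]`:
`|a₁|, …, |aₙ|` is a permutation of `1, …, n`. -/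
def IsSignedPerm (n : ℕ) (a : ℕ → ℤ) : Prop :=
  (Finset.Icc 1 n).image (fun k => |a k|) = Finset.Icc (1 : ℤ) (n : ℤ)

/-!
Let `z = -(n+1)` and extend `p` and `s̃` to `[n]± ∪ {z}` by fixing `z`; this adds the
one-cycle `(z)`, so `C(p ∘ s̃)` goes up by one. Unwinding the definitions gives
`θ₂ θ₁ (aₙ z) = p (-n z) s̃ = p s̃ (s̃⁻¹(-n) z)`. Multiplying a permutation on the right by a
transposition of two points lying in different cycles fuses these two cycles, lowering `C` by
one. On the right-hand side one of the two points is the fixed point `z` of `p s̃`. On the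
left-hand side `aₙ` and `z` lie in different cycles of `θ₂ θ₁`: it maps `aₙ` to `θ₂ z`, and no `x`
shares a cycle with `θ₂ x` under a product of two fixed-point-free involutions. Hence
`C(θ₂ θ₁) = C(p s̃) + 1`, and `θ₁ θ₂ = (θ₂ θ₁)⁻¹` has as many cycles.
-/

open Equiv Equiv.Perm Finset

namespace Equiv.Perm

variable {α : Type*} {f g : Perm α} {a b x y : α}

theorem SameCycle.induction [Finite α] {P : α → Prop} (h : f.SameCycle a b) (ha : P a)
    (hf : ∀ c, f.SameCycle a c → P c → P (f c)) : P b := by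
  obtain ⟨i, rfl⟩ := h.exists_nat_pow_eq
  clear h
  induction i with
  | zero => exact ha
  | succ i ih =>
    rw [pow_succ', mul_apply]
    exact hf _ ⟨i, by simp⟩ ih

theorem not_sameCycle_mul_apply {θ₁ θ₂ : Perm α} (h₁ : Function.Involutive θ₁)
    (h₂ : Function.Involutive θ₂) (hθ₁ : ∀ x, θ₁ x ≠ x) (hθ₂ : ∀ x, θ₂ x ≠ x) (x : α) :
    ¬ (θ₂ * θ₁).SameCycle x (θ₂ x) := by
  -- `θ₂` conjugates `σ` to `σ⁻¹`; so if `σ ^ m x = θ₂ x`, then `σ ^ t x` is a fixed point of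
  -- `θ₂` when `m = 2t`, and of `θ₁` when `m = 2t + 1`.
  set σ := θ₂ * θ₁
  have hsq : θ₂ * θ₂ = 1 := ext h₂
  have hsemi : SemiconjBy θ₂ σ σ⁻¹ := by
    rw [SemiconjBy, mul_inv_rev, Perm.inv_def, Perm.inv_def, h₁.symm_eq_self_of_involutive,
      h₂.symm_eq_self_of_involutive, ← mul_assoc, hsq, one_mul, mul_assoc, hsq,
      mul_one]
  have hconj : ∀ (k : ℤ) (y : α), θ₂ ((σ ^ k) y) = (σ ^ (-k)) (θ₂ y) := fun k y => by
    rw [← mul_apply, (hsemi.zpow_right k).eq, inv_zpow', mul_apply]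
  rintro ⟨m, hm⟩
  obtain ⟨t, rfl | rfl⟩ := Int.even_or_odd' m
  · apply hθ₂ ((σ ^ t) x)
    rw [hconj, ← hm, ← mul_apply, ← zpow_add]
    ring_nf
  · apply hθ₁ ((σ ^ t) x)
    have : θ₁ ((σ ^ t) x) = θ₂ ((σ ^ (1 + t)) x) := by
      rw [zpow_one_add, mul_apply, mul_apply, h₂]
    rw [this, hconj, ← hm, ← mul_apply, ← zpow_add]
    ring_nf

variable [Fintype α] [DecidableEq α]

def cycleSet (f : Perm α) (x : α) : Finset α := {y | f.SameCycle x y}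

def cycleSets (f : Perm α) : Finset (Finset α) := univ.image f.cycleSet

@[simp]
theorem mem_cycleSet : y ∈ f.cycleSet x ↔ f.SameCycle x y := by simp [cycleSet]

theorem cycleSet_eq_of_sameCycle (h : f.SameCycle x y) : f.cycleSet x = f.cycleSet y := by
  ext; simp only [mem_cycleSet]; exact ⟨h.symm.trans, h.trans⟩

theorem cycleSet_eq_singleton (hx : f x = x) : f.cycleSet x = {x} := by
  ext y; simp only [mem_cycleSet, mem_singleton]
  exact ⟨fun h => (h.eq_of_left hx).symm, fun h => h ▸ SameCycle.rfl⟩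

theorem cycleSet_eq_support_cycleOf (hx : f x ≠ x) : f.cycleSet x = (f.cycleOf x).support := by
  ext y; rw [mem_cycleSet, mem_support_cycleOf_iff' hx]

theorem cycleCount_eq_card_cycleSets (f : Perm α) : cycleCount f = #f.cycleSets := by
  have hsplit : f.cycleSets =
      f.cycleFactorsFinset.image support ∪ ({x | f x = x} : Finset α).image ({·}) := by
    ext O
    simp only [cycleSets, mem_union, mem_image, mem_univ, true_and, mem_filter]
    constructor
    · rintro ⟨x, rfl⟩
      by_cases hx : f x = x
      · exact Or.inr ⟨x, hx, (cycleSet_eq_singleton hx).symm⟩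
      · exact Or.inl ⟨f.cycleOf x, cycleOf_mem_cycleFactorsFinset_iff.2 (mem_support.2 hx),
          (cycleSet_eq_support_cycleOf hx).symm⟩
    · rintro (⟨c, hc, rfl⟩ | ⟨x, hx, rfl⟩)
      · obtain ⟨x, hx⟩ := (mem_cycleFactorsFinset_iff.1 hc).1.nonempty_support
        refine ⟨x, ?_⟩
        rw [cycleSet_eq_support_cycleOf (mem_support.1 (mem_cycleFactorsFinset_support_le hc hx)),
          ← cycle_is_cycleOf hx hc]
      · exact ⟨x, cycleSet_eq_singleton hx⟩
  have hdisj : _root_.Disjoint (f.cycleFactorsFinset.image support)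
      (({x | f x = x} : Finset α).image ({·})) := by
    simp only [disjoint_left, mem_image, mem_filter, mem_univ, true_and, not_exists, not_and]
    rintro _ ⟨c, hc, rfl⟩ x hx hcx
    have hxc : x ∈ c.support := hcx ▸ mem_singleton_self x
    exact mem_support.1 (mem_cycleFactorsFinset_support_le hc hxc) hx
  have hinj : Set.InjOn support (f.cycleFactorsFinset : Set (Perm α)) := by
    intro c hc d hd hcd
    obtain ⟨x, hx⟩ := (mem_cycleFactorsFinset_iff.1 hc).1.nonempty_support
    rw [cycle_is_cycleOf hx hc, cycle_is_cycleOf (hcd ▸ hx) hd]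
  rw [hsplit, card_union_of_disjoint hdisj, card_image_of_injOn hinj,
    card_image_of_injective _ singleton_injective, cycleCount, cycleType_def, Multiset.card_map]
  rfl

theorem cycleCount_inv (f : Perm α) : cycleCount f⁻¹ = cycleCount f := by
  rw [cycleCount, cycleCount, cycleType_inv]
  congr 2
  ext x
  rw [mem_filter, mem_filter, Perm.inv_eq_iff_eq, eq_comm]

theorem cycleCount_eq_card_cycleType_add (f : Perm α) :
    cycleCount f = f.cycleType.card + (Fintype.card α - #f.support) := by
  rw [cycleCount, ← card_compl, support, compl_filter]
  simp

theorem cycleCount_extendDomain {β : Type*} [Fintype β] [DecidableEq β] {p : β → Prop}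
    [DecidablePred p] (e : α ≃ Subtype p) (g : Perm α) :
    cycleCount (g.extendDomain e) = cycleCount g + (Fintype.card β - Fintype.card α) := by
  have hcard : Fintype.card α ≤ Fintype.card β :=
    Fintype.card_le_of_embedding (e.toEmbedding.trans (Function.Embedding.subtype p))
  have hsupp : #g.support ≤ Fintype.card α := card_le_univ _
  rw [cycleCount_eq_card_cycleType_add, cycleCount_eq_card_cycleType_add, cycleType_extendDomain,
    card_support_extend_domain]
  omega

theorem cycleSet_eq_of_forall_apply_eq (h : ∀ c ∈ f.cycleSet a, f c = g c) :
    g.cycleSet a = f.cycleSet a := by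
  ext b
  simp only [mem_cycleSet] at h ⊢
  constructor
  · intro hb
    refine hb.induction SameCycle.rfl fun c _ hc => ?_
    rw [← h c hc]
    exact sameCycle_apply_right.2 hc
  · intro hb
    refine hb.induction SameCycle.rfl fun c hc hgc => ?_
    rw [h c hc]
    exact sameCycle_apply_right.2 hgc

theorem sameCycle_mul_swap (hxy : ¬ f.SameCycle x y) : (f * swap x y).SameCycle x y := by
  have hgx : (f * swap x y) x = f y := by simp
  refine (sameCycle_apply_left.2 (SameCycle.refl f y)).induction (P := (f * swap x y).SameCycle x)
    (hgx ▸ sameCycle_apply_right.2 SameCycle.rfl) fun c hc hxc => ?_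
  rw [sameCycle_apply_left] at hc
  by_cases hcy : c = y
  · rw [hcy, ← hgx]
    exact sameCycle_apply_right.2 SameCycle.rfl
  · have hcx : c ≠ x := fun h => hxy (h ▸ hc).symm
    have : (f * swap x y) c = f c := by simp [swap_apply_of_ne_of_ne hcx hcy]
    rw [← this]
    exact sameCycle_apply_right.2 hxc

theorem SameCycle.mul_swap_s6 (hxy : ¬ f.SameCycle x y) (h : f.SameCycle a b) :
    (f * swap x y).SameCycle a b := by
  have hstep : ∀ c, (f * swap x y).SameCycle c (f c) := by
    intro c
    by_cases hcx : c = x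
    · subst hcx
      simpa using (sameCycle_mul_swap hxy).trans (sameCycle_apply_right.2 SameCycle.rfl)
    by_cases hcy : c = y
    · subst hcy
      simpa using (sameCycle_mul_swap hxy).symm.trans (sameCycle_apply_right.2 SameCycle.rfl)
    · simpa [swap_apply_of_ne_of_ne hcx hcy] using
        (sameCycle_apply_right.2 SameCycle.rfl : (f * swap x y).SameCycle c _)
  exact h.induction SameCycle.rfl fun c _ hac => hac.trans (hstep c)

theorem SameCycle.mem_cycleSet_union_iff {c d : α} (h : f.SameCycle c d) :
    c ∈ f.cycleSet x ∪ f.cycleSet y ↔ d ∈ f.cycleSet x ∪ f.cycleSet y := by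
  simp only [mem_union, mem_cycleSet]
  exact or_congr ⟨(·.trans h), (·.trans h.symm)⟩ ⟨(·.trans h), (·.trans h.symm)⟩

theorem cycleSet_mul_swap_of_notMem {c : α} (hc : c ∉ f.cycleSet x ∪ f.cycleSet y) :
    (f * swap x y).cycleSet c = f.cycleSet c := by
  refine cycleSet_eq_of_forall_apply_eq fun d hd => ?_
  have hd : d ∉ f.cycleSet x ∪ f.cycleSet y := (mem_cycleSet.1 hd).mem_cycleSet_union_iff.not.1 hc
  simp only [mem_union, mem_cycleSet, not_or] at hd
  rw [Perm.mul_apply, swap_apply_of_ne_of_ne (by rintro rfl; exact hd.1 SameCycle.rfl)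
    (by rintro rfl; exact hd.2 SameCycle.rfl)]

theorem cycleSet_mul_swap_of_mem (hxy : ¬ f.SameCycle x y) {c : α}
    (hc : c ∈ f.cycleSet x ∪ f.cycleSet y) :
    (f * swap x y).cycleSet c = f.cycleSet x ∪ f.cycleSet y := by
  have hx : (f * swap x y).cycleSet x = f.cycleSet x ∪ f.cycleSet y := by
    ext d
    rw [mem_cycleSet]
    constructor
    · intro hd
      by_contra hdU
      have hxd := cycleSet_mul_swap_of_notMem hdU ▸ mem_cycleSet.2 hd.symm
      exact hdU ((mem_cycleSet.1 hxd).mem_cycleSet_union_iff.2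
        (mem_union_left _ (mem_cycleSet.2 SameCycle.rfl)))
    · intro hd
      simp only [mem_union, mem_cycleSet] at hd
      rcases hd with hd | hd
      · exact hd.mul_swap_s6 hxy
      · exact (sameCycle_mul_swap hxy).trans (hd.mul_swap_s6 hxy)
  rw [← hx] at hc
  rw [← cycleSet_eq_of_sameCycle (mem_cycleSet.1 hc), hx]

theorem cycleCount_mul_swap_add_one (hxy : ¬ f.SameCycle x y) :
    cycleCount (f * swap x y) + 1 = cycleCount f := by
  set U := f.cycleSet x ∪ f.cycleSet y
  have hx : x ∈ U := mem_union_left _ (mem_cycleSet.2 SameCycle.rfl)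
  have hy : y ∈ U := mem_union_right _ (mem_cycleSet.2 SameCycle.rfl)
  set R := ({c | c ∉ U} : Finset α).image f.cycleSet
  have hR : ∀ O ∈ R, ∀ c ∈ U, c ∉ O := by
    simp only [R, mem_image, mem_filter, mem_univ, true_and]
    rintro _ ⟨d, hd, rfl⟩ c hc hcd
    exact hd ((mem_cycleSet.1 hcd).mem_cycleSet_union_iff.2 hc)
  have hg : (f * swap x y).cycleSets = insert U R := by
    ext O
    simp only [cycleSets, R, mem_insert, mem_image, mem_filter, mem_univ, true_and]
    constructor
    · rintro ⟨c, rfl⟩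
      by_cases hc : c ∈ U
      · exact Or.inl (cycleSet_mul_swap_of_mem hxy hc)
      · exact Or.inr ⟨c, hc, (cycleSet_mul_swap_of_notMem hc).symm⟩
    · rintro (rfl | ⟨c, hc, rfl⟩)
      · exact ⟨x, cycleSet_mul_swap_of_mem hxy hx⟩
      · exact ⟨c, cycleSet_mul_swap_of_notMem hc⟩
  have hf : f.cycleSets = insert (f.cycleSet x) (insert (f.cycleSet y) R) := by
    ext O
    simp only [cycleSets, R, mem_insert, mem_image, mem_filter, mem_univ, true_and]
    constructor
    · rintro ⟨c, rfl⟩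
      by_cases hc : c ∈ U
      · simp only [U, mem_union, mem_cycleSet] at hc
        rcases hc with hc | hc
        · exact Or.inl (cycleSet_eq_of_sameCycle hc).symm
        · exact Or.inr (Or.inl (cycleSet_eq_of_sameCycle hc).symm)
      · exact Or.inr (Or.inr ⟨c, hc, rfl⟩)
    · rintro (rfl | rfl | ⟨c, -, rfl⟩) <;> exact ⟨_, rfl⟩
  have hUR : U ∉ R := fun h => hR U h x hx hx
  have hxR : f.cycleSet x ∉ insert (f.cycleSet y) R := by
    rw [mem_insert]
    rintro (h | h)
    · exact hxy (mem_cycleSet.1 (h ▸ mem_cycleSet.2 SameCycle.rfl))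
    · exact hR _ h x hx (mem_cycleSet.2 SameCycle.rfl)
  have hyR : f.cycleSet y ∉ R := fun h => hR _ h y hy (mem_cycleSet.2 SameCycle.rfl)
  rw [cycleCount_eq_card_cycleSets, cycleCount_eq_card_cycleSets, hg, hf,
    card_insert_of_notMem hUR, card_insert_of_notMem hxR, card_insert_of_notMem hyR]

end Equiv.Perm

section Sequences

variable {n k : ℕ} {a : ℕ → ℤ}

theorem bseq_two_mul (hk : k ≤ n) : bseq n a (2 * k) = seq n a k := by
  unfold bseq seq
  split_ifs <;> first | rfl | omega | (congr 1; omega)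

theorem bseq_two_mul_add_one (hk : k < n) : bseq n a (2 * k + 1) = seq n a (2 * n - k) := by
  unfold bseq seq
  split_ifs <;> first | contradiction | omega | (congr 2; omega)

theorem bseq_two_mul_add_one_self : bseq n a (2 * n + 1) = -(n : ℤ) - 1 := by
  rw [bseq, if_neg (by omega), if_pos rfl]
  ring

theorem seq_two_mul_sub (hk : k < n) : seq n a (2 * n - k) = -seq n a (k + 1) := by
  unfold seq
  split_ifs <;> first | contradiction | omega | (congr 2; omega)

theorem seq_succ_mod_of_add_eq {j : ℕ} (hk : k ≤ n) (hjk : j + k = 2 * n) :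
    seq n a ((j + 1) % (2 * n + 1)) = -seq n a k := by
  rcases Nat.eq_zero_or_pos k with rfl | hk0
  · simp [seq, show j + 1 = 2 * n + 1 by omega]
  · rw [Nat.mod_eq_of_lt (by omega)]
    unfold seq
    split_ifs <;> first | contradiction | omega | (congr 2; omega)

theorem seq_of_mem_Icc (hk : k ∈ Icc 1 n) : seq n a k = a k := by
  rw [mem_Icc] at hk
  simp [seq, hk.2, show k ≠ 0 by omega]

theorem seq_two_mul_add_one_sub (hk : k ∈ Icc 1 n) : seq n a (2 * n + 1 - k) = -a k := by
  rw [mem_Icc] at hk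
  unfold seq
  split_ifs <;> first | omega | (congr 2; omega)

theorem IsSignedPerm.image_seq (ha : IsSignedPerm n a) :
    (range (2 * n + 1)).image (seq n a) = Icc (-(n : ℤ)) n := by
  refine (eq_of_subset_of_card_le (fun x hx => ?_) ?_).symm
  · rw [mem_image]
    by_cases hx0 : x = 0
    · exact ⟨0, by simp, by simp [seq, hx0]⟩
    have hxabs : |x| ∈ Icc (1 : ℤ) n := by
      rw [mem_Icc] at hx ⊢
      exact ⟨Int.one_le_abs hx0, abs_le.2 hx⟩
    rw [← ha, mem_image] at hxabs
    obtain ⟨k, hk, hkx⟩ := hxabs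
    have hk' := mem_Icc.1 hk
    rcases abs_eq_abs.1 hkx with h | h
    · exact ⟨k, mem_range.2 (by omega), by rw [seq_of_mem_Icc hk, h]⟩
    · exact ⟨2 * n + 1 - k, mem_range.2 (by omega), by rw [seq_two_mul_add_one_sub hk, h, neg_neg]⟩
  · calc #((range (2 * n + 1)).image (seq n a)) ≤ #(range (2 * n + 1)) := card_image_le
      _ = #(Icc (-(n : ℤ)) n) := by rw [card_range, Int.card_Icc]; omega

theorem IsSignedPerm.seq_mem (ha : IsSignedPerm n a) {j : ℕ} (hj : j ≤ 2 * n) :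
    seq n a j ∈ Icc (-(n : ℤ)) n :=
  ha.image_seq ▸ mem_image_of_mem _ (mem_range.2 (by omega))

theorem IsSignedPerm.injOn_seq (ha : IsSignedPerm n a) :
    Set.InjOn (seq n a) (range (2 * n + 1)) :=
  injOn_of_card_image_eq (by rw [ha.image_seq, card_range, Int.card_Icc]; omega)

end Sequences

section Extension

variable {n : ℕ}

def Jpm.bot (n : ℕ) : Jpm n := ⟨-(n : ℤ) - 1, mem_Icc.2 ⟨le_rfl, by omega⟩⟩

@[simp]
theorem Jpm.coe_bot : (Jpm.bot n : ℤ) = -(n : ℤ) - 1 := rfl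

def ipmEquiv (n : ℕ) : Ipm n ≃ {x : Jpm n // -(n : ℤ) ≤ x} where
  toFun i := ⟨⟨i, mem_Icc.2 ⟨by linarith [(mem_Icc.1 i.2).1], (mem_Icc.1 i.2).2⟩⟩,
    (mem_Icc.1 i.2).1⟩
  invFun x := ⟨x.1, mem_Icc.2 ⟨x.2, (mem_Icc.1 x.1.2).2⟩⟩
  left_inv _ := rfl
  right_inv _ := rfl

theorem Jpm.eq_bot_or_le (x : Jpm n) : x = Jpm.bot n ∨ -(n : ℤ) ≤ x := by
  rcases (mem_Icc.1 x.2).1.eq_or_lt with h | h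
  · exact Or.inl (Subtype.ext h.symm)
  · exact Or.inr (by omega)

theorem coe_extendDomain_ipmEquiv (g : Perm (Ipm n)) {x : Jpm n} (hx : -(n : ℤ) ≤ x) :
    (g.extendDomain (ipmEquiv n) x : ℤ) = g ⟨x, mem_Icc.2 ⟨hx, (mem_Icc.1 x.2).2⟩⟩ := by
  rw [extendDomain_apply_subtype g (ipmEquiv n) hx]
  rfl

theorem extendDomain_ipmEquiv_bot (g : Perm (Ipm n)) :
    g.extendDomain (ipmEquiv n) (Jpm.bot n) = Jpm.bot n :=
  extendDomain_apply_not_subtype _ _ (by simp [Jpm.bot])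

theorem card_Jpm_sub_card_Ipm : Fintype.card (Jpm n) - Fintype.card (Ipm n) = 1 := by
  simp only [Fintype.card_coe, Int.card_Icc]
  omega

end Extension

section Pairing

variable {n k : ℕ} {a : ℕ → ℤ} {θ : Perm (Jpm n)} {u : Jpm n}

def SwapsPairs (n : ℕ) (b : ℕ → ℤ) (θ : Perm (Jpm n)) : Prop :=
  ∀ k ≤ n, ∀ x y : Jpm n, (x : ℤ) = b (2 * k) → (y : ℤ) = b (2 * k + 1) → θ x = y ∧ θ y = x

theorem IsSignedPerm.bseq_mem (ha : IsSignedPerm n a) {j : ℕ} (hj : j ≤ 2 * n + 1) :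
    bseq n a j ∈ Icc (-(n : ℤ) - 1) n := by
  have hsub : Icc (-(n : ℤ)) n ⊆ Icc (-(n : ℤ) - 1) n := Icc_subset_Icc (by omega) le_rfl
  obtain ⟨k, rfl | rfl⟩ := Nat.even_or_odd' j
  · rw [bseq_two_mul (by omega)]
    exact hsub (ha.seq_mem (by omega))
  · rcases (show k < n ∨ k = n by omega) with hk | rfl
    · rw [bseq_two_mul_add_one hk]
      exact hsub (ha.seq_mem (by omega))
    · rw [bseq_two_mul_add_one_self, mem_Icc]
      omega

theorem IsSignedPerm.exists_bseq_eq (ha : IsSignedPerm n a) (x : Jpm n) :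
    ∃ j ≤ 2 * n + 1, (x : ℤ) = bseq n a j := by
  rcases x.eq_bot_or_le with rfl | hx
  · exact ⟨2 * n + 1, le_rfl, bseq_two_mul_add_one_self.symm⟩
  have : (x : ℤ) ∈ (range (2 * n + 1)).image (seq n a) :=
    ha.image_seq ▸ mem_Icc.2 ⟨hx, (mem_Icc.1 x.2).2⟩
  obtain ⟨i, hi, hix⟩ := mem_image.1 this
  rw [mem_range] at hi
  rcases le_or_gt i n with hin | hin
  · exact ⟨2 * i, by omega, by rw [bseq_two_mul hin, hix]⟩
  · refine ⟨2 * (2 * n - i) + 1, by omega, ?_⟩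
    rw [bseq_two_mul_add_one (by omega), Nat.sub_sub_self (by omega), hix]

theorem IsSignedPerm.bseq_two_mul_ne (ha : IsSignedPerm n a) (hk : k ≤ n) :
    bseq n a (2 * k) ≠ bseq n a (2 * k + 1) := by
  rw [bseq_two_mul hk]
  rcases hk.lt_or_eq with hk | rfl
  · rw [bseq_two_mul_add_one hk]
    intro h
    have := ha.injOn_seq (mem_range.2 (by omega)) (mem_range.2 (by omega)) h
    omega
  · rw [bseq_two_mul_add_one_self]
    have := (mem_Icc.1 (ha.seq_mem (j := k) (by omega))).1
    omega

theorem SwapsPairs.exists_partner (ha : IsSignedPerm n a) (hθ : SwapsPairs n (bseq n a) θ)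
    (x : Jpm n) : ∃ y, θ x = y ∧ θ y = x ∧ y ≠ x := by
  obtain ⟨j, hj, hx⟩ := ha.exists_bseq_eq x
  obtain ⟨k, rfl | rfl⟩ := Nat.even_or_odd' j
  · obtain ⟨h₁, h₂⟩ := hθ k (by omega) x ⟨_, ha.bseq_mem (j := 2 * k + 1) (by omega)⟩ hx rfl
    exact ⟨_, h₁, h₂, fun h =>
      ha.bseq_two_mul_ne (k := k) (by omega) (hx ▸ congrArg Subtype.val h).symm⟩
  · obtain ⟨h₁, h₂⟩ := hθ k (by omega) ⟨_, ha.bseq_mem (j := 2 * k) (by omega)⟩ x rfl hx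
    exact ⟨_, h₂, h₁, fun h =>
      ha.bseq_two_mul_ne (k := k) (by omega) (hx ▸ congrArg Subtype.val h)⟩

theorem SwapsPairs.involutive (ha : IsSignedPerm n a) (hθ : SwapsPairs n (bseq n a) θ) :
    Function.Involutive θ := fun x => by
  obtain ⟨y, h₁, h₂, -⟩ := hθ.exists_partner ha x
  rw [h₁, h₂]

theorem SwapsPairs.apply_ne (ha : IsSignedPerm n a) (hθ : SwapsPairs n (bseq n a) θ)
    (x : Jpm n) : θ x ≠ x := by
  obtain ⟨y, h₁, -, hy⟩ := hθ.exists_partner ha x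
  rwa [h₁]

theorem SwapsPairs.apply_of_eq_seq_self (hθ : SwapsPairs n (bseq n a) θ)
    (hu : (u : ℤ) = seq n a n) : θ u = Jpm.bot n :=
  (hθ n le_rfl u _ (hu.trans (bseq_two_mul le_rfl).symm) bseq_two_mul_add_one_self.symm).1

theorem SwapsPairs.apply_swap (ha : IsSignedPerm n a) (hθ : SwapsPairs n (bseq n a) θ)
    (hu : (u : ℤ) = seq n a n) {j : ℕ} (hj : j ≤ 2 * n) {x : Jpm n} (hx : (x : ℤ) = seq n a j) :
    (θ (swap u (Jpm.bot n) x) : ℤ) = -seq n a ((j + 1) % (2 * n + 1)) := by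
  have hxu : j ≠ n → x ≠ u := fun hjn h =>
    hjn (ha.injOn_seq (mem_range.2 (by omega)) (mem_range.2 (by omega))
      (hx ▸ hu ▸ congrArg Subtype.val h))
  have hxb : x ≠ Jpm.bot n := fun h => by
    have := (mem_Icc.1 (ha.seq_mem hj)).1
    rw [← hx, h, Jpm.coe_bot] at this
    omega
  rcases lt_trichotomy j n with hjn | rfl | hjn
  · rw [swap_apply_of_ne_of_ne (hxu hjn.ne) hxb,
      (hθ j hjn.le x ⟨_, ha.bseq_mem (j := 2 * j + 1) (by omega)⟩
        (hx.trans (bseq_two_mul hjn.le).symm) rfl).1,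
      Nat.mod_eq_of_lt (by omega : j + 1 < 2 * n + 1)]
    exact (bseq_two_mul_add_one hjn).trans (seq_two_mul_sub hjn)
  · rw [show x = u from Subtype.ext (hx.trans hu.symm), swap_apply_left,
      (hθ j le_rfl ⟨_, ha.bseq_mem (j := 2 * j) (by omega)⟩ _ rfl
        bseq_two_mul_add_one_self.symm).2, seq_succ_mod_of_add_eq le_rfl (two_mul j).symm,
      neg_neg]
    exact bseq_two_mul le_rfl
  · have hk : 2 * n - j < n := by omega
    rw [swap_apply_of_ne_of_ne (hxu hjn.ne') hxb,
      (hθ _ hk.le ⟨_, ha.bseq_mem (j := 2 * (2 * n - j)) (by omega)⟩ x rfl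
        (by rw [hx, bseq_two_mul_add_one hk, Nat.sub_sub_self (by omega)])).2,
      seq_succ_mod_of_add_eq hk.le (by omega), neg_neg]
    exact bseq_two_mul hk.le

end Pairing

section Product

variable {n : ℕ} {a : ℕ → ℤ}

theorem coe_extendDomain_swap_apply {p : Perm (Ipm n)}
    (hp : ∀ j : Ipm n, (p j : ℤ) = if (j : ℤ) = -(n : ℤ) then (n : ℤ) else (j : ℤ) - 1)
    {m : Jpm n} (hm : (m : ℤ) = -n) {y : Jpm n} (hy : -(n : ℤ) ≤ y) :
    (p.extendDomain (ipmEquiv n) (swap m (Jpm.bot n) y) : ℤ) = y - 1 := by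
  by_cases hym : y = m
  · rw [hym, swap_apply_left, extendDomain_ipmEquiv_bot, Jpm.coe_bot, hm]
  · have hyb : y ≠ Jpm.bot n := fun h => by rw [h, Jpm.coe_bot] at hy; omega
    rw [swap_apply_of_ne_of_ne hym hyb, coe_extendDomain_ipmEquiv _ hy, hp,
      if_neg (fun h => hym (Subtype.ext (h.trans hm.symm)))]

theorem mul_swap_eq_extendDomain (ha : IsSignedPerm n a) {p st : Perm (Ipm n)}
    (hp : ∀ j : Ipm n, (p j : ℤ) = if (j : ℤ) = -(n : ℤ) then (n : ℤ) else (j : ℤ) - 1)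
    (hst : ∀ k ≤ 2 * n, ∀ x : Ipm n, (x : ℤ) = seq n a k →
      ((st x : ℤ) = seq n a ((k + 1) % (2 * n + 1))))
    {θ₁ θ₂ : Perm (Jpm n)} (hθ₂ : ∀ x : Jpm n, (θ₂ x : ℤ) = -(x : ℤ) - 1)
    (hθ₁ : SwapsPairs n (bseq n a) θ₁) {u m : Jpm n} (hu : (u : ℤ) = seq n a n)
    (hm : (m : ℤ) = -n) :
    θ₂ * θ₁ * swap u (Jpm.bot n) =
      p.extendDomain (ipmEquiv n) * swap m (Jpm.bot n) * st.extendDomain (ipmEquiv n) := by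
  ext x
  simp only [Perm.mul_apply, hθ₂]
  rcases x.eq_bot_or_le with rfl | hx
  · rw [swap_apply_right, hθ₁.apply_of_eq_seq_self hu, extendDomain_ipmEquiv_bot,
      swap_apply_right, coe_extendDomain_ipmEquiv _ (le_of_eq hm.symm), hp, if_pos hm, Jpm.coe_bot]
    ring
  · obtain ⟨j, hj, hjx⟩ := mem_image.1 (ha.image_seq ▸ mem_Icc.2 ⟨hx, (mem_Icc.1 x.2).2⟩)
    rw [mem_range] at hj
    have hS : (st.extendDomain (ipmEquiv n) x : ℤ) = seq n a ((j + 1) % (2 * n + 1)) := by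
      rw [coe_extendDomain_ipmEquiv _ hx]
      exact hst j (by omega) _ hjx.symm
    rw [hθ₁.apply_swap ha hu (by omega) hjx.symm, coe_extendDomain_swap_apply hp hm
      (hS ▸ (mem_Icc.1 (ha.seq_mem (Nat.lt_succ_iff.1 (Nat.mod_lt _ (by omega))))).1), hS]
    ring

end Product

theorem stmt_6_general (n : ℕ) (a : ℕ → ℤ) (hsigned : IsSignedPerm n a)
    (p : Equiv.Perm (Ipm n))
    (hp : ∀ j : Ipm n, (p j : ℤ) = if (j : ℤ) = -(n : ℤ) then (n : ℤ) else (j : ℤ) - 1)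
    (st : Equiv.Perm (Ipm n))
    (hst : ∀ k ≤ 2 * n, ∀ x : Ipm n, (x : ℤ) = seq n a k →
      ((st x : ℤ) = seq n a ((k + 1) % (2 * n + 1))))
    (θ₁ θ₂ : Equiv.Perm (Jpm n))
    (hθ₂ : ∀ x : Jpm n, (θ₂ x : ℤ) = -(x : ℤ) - 1)
    (hθ₁ : ∀ k ≤ n, ∀ x y : Jpm n,
      (x : ℤ) = bseq n a (2 * k) → (y : ℤ) = bseq n a (2 * k + 1) →
      θ₁ x = y ∧ θ₁ y = x) :
    cycleCount (p * st) + 1 = cycleCount (θ₁ * θ₂) := by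
  set e := ipmEquiv n
  set z := Jpm.bot n
  set u : Jpm n := (e ⟨seq n a n, hsigned.seq_mem (by omega)⟩).1
  set m : Jpm n := (e ⟨-n, mem_Icc.2 ⟨le_rfl, by omega⟩⟩).1
  set S := st.extendDomain e
  have h₁ : Function.Involutive θ₁ := SwapsPairs.involutive hsigned hθ₁
  have h₂ : Function.Involutive θ₂ := fun x => Subtype.ext (by rw [hθ₂, hθ₂]; ring)
  have hθ₂ne : ∀ x, θ₂ x ≠ x := fun x h => by have := hθ₂ x; rw [h] at this; omega
  have hsep : ¬ (θ₂ * θ₁).SameCycle u z := by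
    rw [← sameCycle_apply_left, mul_apply, SwapsPairs.apply_of_eq_seq_self hθ₁ rfl,
      sameCycle_comm]
    exact not_sameCycle_mul_apply h₁ h₂ (SwapsPairs.apply_ne hsigned hθ₁) hθ₂ne z
  have hSz : S z = z := extendDomain_ipmEquiv_bot st
  have hw : ¬ ((p * st).extendDomain e).SameCycle (S⁻¹ m) z := fun h => by
    have hmz := h.eq_of_right (extendDomain_ipmEquiv_bot _)
    rw [Perm.inv_eq_iff_eq, hSz] at hmz
    have : -(n : ℤ) = -n - 1 := congrArg Subtype.val hmz
    omega
  have hconj : swap m z * S = S * swap (S⁻¹ m) z := by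
    rw [swap_mul_eq_mul_swap, Perm.inv_eq_iff_eq.2 hSz.symm]
  calc cycleCount (p * st) + 1 = cycleCount ((p * st).extendDomain e) := by
        rw [cycleCount_extendDomain, card_Jpm_sub_card_Ipm]
    _ = cycleCount ((p * st).extendDomain e * swap (S⁻¹ m) z) + 1 :=
        (cycleCount_mul_swap_add_one hw).symm
    _ = cycleCount (θ₂ * θ₁ * swap u z) + 1 := by
        rw [mul_swap_eq_extendDomain (u := u) (m := m) hsigned hp hst hθ₂ hθ₁ rfl rfl, mul_assoc,
          hconj, ← mul_assoc, extendDomain_mul]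
    _ = cycleCount (θ₂ * θ₁) := cycleCount_mul_swap_add_one hsep
    _ = cycleCount (θ₁ * θ₂) := by
        rw [← cycleCount_inv, mul_inv_rev, Perm.inv_def, Perm.inv_def,
          h₁.symm_eq_self_of_involutive, h₂.symm_eq_self_of_involutive]

/-- Let `p` be the `(2n+1)`-cycle `(0, -1, …, -n, n, n-1, …, 1)` and
`s̃` the `(2n+1)`-cycle `(0, a₁, …, aₙ, -aₙ, …, -a₁)` on `[n]±`, for a signed
permutation `a`.  On `[n]± ∪ {-(n+1)}`, let `θ₂` be the fixed-point-free involution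
`(0,-1)(1,-2)⋯(n,-n-1)`, i.e. `θ₂(x) = -x-1`, and let `θ₁` be the fixed-point-free
involution `(b₀,b₁)(b₂,b₃)⋯(b_{2n},b_{2n+1})`.  Then `C(p ∘ s̃) = C(θ₁ ∘ θ₂) - 1`. -/
theorem stmt_6 (n : ℕ) (hn : 1 ≤ n) (a : ℕ → ℤ) (hsigned : IsSignedPerm n a)
    (p : Equiv.Perm (Ipm n))
    (hp : ∀ j : Ipm n, (p j : ℤ) = if (j : ℤ) = -(n : ℤ) then (n : ℤ) else (j : ℤ) - 1)
    (st : Equiv.Perm (Ipm n))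
    (hst : ∀ k ≤ 2 * n, ∀ x : Ipm n, (x : ℤ) = seq n a k →
      ((st x : ℤ) = seq n a ((k + 1) % (2 * n + 1))))
    (θ₁ θ₂ : Equiv.Perm (Jpm n))
    (hθ₂ : ∀ x : Jpm n, (θ₂ x : ℤ) = -(x : ℤ) - 1)
    (hθ₁ : ∀ k ≤ n, ∀ x y : Jpm n,
      (x : ℤ) = bseq n a (2 * k) → (y : ℤ) = bseq n a (2 * k + 1) →
      θ₁ x = y ∧ θ₁ y = x) :
    cycleCount (p * st) + 1 = cycleCount (θ₁ * θ₂) :=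
  stmt_6_general n a hsigned p hp st hst θ₁ θ₂ hθ₂ hθ₁
end

section
/- Let n ≥ 1, let a₁, …, aₙ be nonzero integers such that |a₁|, …, |aₙ| is a permutation of 1, …, n, let p be the (2n+1)-cycle (0, −1, −2, …, −n, n, n−1, …, 1) on [n]±, and let s̃ be the (2n+1)-cycle (0, a₁, a₂, …, aₙ, −aₙ, −aₙ₋₁, …, −a₁) on [n]±. Then n and aₙ lie in the same cycle of the permutation p ∘ s̃, i.e., (p ∘ s̃)^m(n) = aₙ for some integer m. -/
section Aux

variable {n : ℕ} {a : ℕ → ℤ}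

lemma seq_zero' : seq n a 0 = 0 := rfl

lemma seq_low {k : ℕ} (h1 : 1 ≤ k) (h2 : k ≤ n) : seq n a k = a k := by
  unfold seq; rw [if_neg (by omega), if_pos h2]

lemma seq_high {k : ℕ} (h1 : n + 1 ≤ k) (h2 : k ≤ 2 * n) :
    seq n a k = -a (2 * n + 1 - k) := by
  unfold seq; rw [if_neg (by omega), if_neg (by omega)]

lemma habs (hs : IsSignedPerm n a) {k : ℕ} (h1 : 1 ≤ k) (h2 : k ≤ n) :
    1 ≤ |a k| ∧ |a k| ≤ n := by
  have : |a k| ∈ Finset.Icc (1 : ℤ) (n : ℤ) := by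
    rw [← hs]
    exact Finset.mem_image_of_mem _ (Finset.mem_Icc.mpr ⟨h1, h2⟩)
  simpa [Finset.mem_Icc] using this

lemma hainj (hs : IsSignedPerm n a) {k j : ℕ} (hk1 : 1 ≤ k) (hk2 : k ≤ n)
    (hj1 : 1 ≤ j) (hj2 : j ≤ n) (h : |a k| = |a j|) : k = j := by
  have hcard : ((Finset.Icc 1 n).image (fun k => |a k|)).card = (Finset.Icc 1 n).card := by
    rw [hs, Int.card_Icc, Nat.card_Icc]; omega
  exact Finset.injOn_of_card_image_eq hcard
    (Finset.mem_coe.mpr (Finset.mem_Icc.mpr ⟨hk1, hk2⟩))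
    (Finset.mem_coe.mpr (Finset.mem_Icc.mpr ⟨hj1, hj2⟩)) h

lemma seq_mem (hs : IsSignedPerm n a) {k : ℕ} (hk : k ≤ 2 * n) :
    seq n a k ∈ Finset.Icc (-(n : ℤ)) (n : ℤ) := by
  rw [Finset.mem_Icc]
  rcases Nat.eq_zero_or_pos k with rfl | hk0
  · rw [seq_zero']; omega
  · by_cases hkn : k ≤ n
    · rw [seq_low hk0 hkn]
      have := habs hs hk0 hkn
      rcases abs_cases (a k) with ⟨e, _⟩ | ⟨e, _⟩ <;> omega
    · rw [seq_high (by omega) hk]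
      have := habs hs (k := 2 * n + 1 - k) (by omega) (by omega)
      rcases abs_cases (a (2 * n + 1 - k)) with ⟨e, _⟩ | ⟨e, _⟩ <;> omega

lemma seq_ne_zero (hs : IsSignedPerm n a) {k : ℕ} (hk0 : 1 ≤ k) (hk : k ≤ 2 * n) :
    seq n a k ≠ 0 := by
  by_cases hkn : k ≤ n
  · rw [seq_low hk0 hkn]
    have := habs hs hk0 hkn
    rcases abs_cases (a k) with ⟨e, _⟩ | ⟨e, _⟩ <;> omega
  · rw [seq_high (by omega) hk]
    have := habs hs (k := 2 * n + 1 - k) (by omega) (by omega)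
    rcases abs_cases (a (2 * n + 1 - k)) with ⟨e, _⟩ | ⟨e, _⟩ <;> omega

lemma seq_inj (hs : IsSignedPerm n a) {k j : ℕ} (hk : k ≤ 2 * n) (hj : j ≤ 2 * n)
    (h : seq n a k = seq n a j) : k = j := by
  rcases Nat.eq_zero_or_pos k with rfl | hk0
  · rcases Nat.eq_zero_or_pos j with rfl | hj0
    · rfl
    · exact absurd (by rw [← h]; rfl) (seq_ne_zero hs hj0 hj)
  rcases Nat.eq_zero_or_pos j with rfl | hj0
  · exact absurd (by rw [h]; rfl) (seq_ne_zero hs hk0 hk)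
  by_cases hkn : k ≤ n <;> by_cases hjn : j ≤ n
  · rw [seq_low hk0 hkn, seq_low hj0 hjn] at h
    exact hainj hs hk0 hkn hj0 hjn (by rw [h])
  · rw [seq_low hk0 hkn, seq_high (by omega) hj] at h
    have habseq : |a k| = |a (2 * n + 1 - j)| := by rw [h, abs_neg]
    have hkj := hainj hs hk0 hkn (j := 2 * n + 1 - j) (by omega) (by omega) habseq
    rw [← hkj] at h
    have := habs hs hk0 hkn
    rcases abs_cases (a k) with ⟨e, _⟩ | ⟨e, _⟩ <;> omega
  · rw [seq_high (by omega) hk, seq_low hj0 hjn] at h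
    have habseq : |a (2 * n + 1 - k)| = |a j| := by rw [← h, abs_neg]
    have hkj := hainj hs (k := 2 * n + 1 - k) (by omega) (by omega) hj0 hjn habseq
    rw [hkj] at h
    have := habs hs hj0 hjn
    rcases abs_cases (a j) with ⟨e, _⟩ | ⟨e, _⟩ <;> omega
  · rw [seq_high (by omega) hk, seq_high (by omega) hj] at h
    have h' : a (2 * n + 1 - k) = a (2 * n + 1 - j) := by omega
    have := hainj hs (k := 2 * n + 1 - k) (by omega) (by omega)
      (j := 2 * n + 1 - j) (by omega) (by omega) (by rw [h'])
    omega

lemma seq_surj (hs : IsSignedPerm n a) {v : ℤ} (h1 : -(n : ℤ) ≤ v) (h2 : v ≤ n) :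
    ∃ k, k ≤ 2 * n ∧ seq n a k = v := by
  rcases eq_or_ne v 0 with rfl | hv
  · exact ⟨0, by omega, rfl⟩
  · have hmem : |v| ∈ Finset.Icc (1 : ℤ) (n : ℤ) := by
      rw [Finset.mem_Icc]
      rcases abs_cases v with ⟨e, _⟩ | ⟨e, _⟩ <;> omega
    rw [← hs] at hmem
    obtain ⟨k, hk, hak⟩ := Finset.mem_image.mp hmem
    rw [Finset.mem_Icc] at hk
    rcases abs_eq_abs.mp hak with he | he
    · exact ⟨k, by omega, by rw [seq_low hk.1 hk.2]; exact he⟩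
    · refine ⟨2 * n + 1 - k, by omega, ?_⟩
      rw [seq_high (by omega) (by omega)]
      have hidx : 2 * n + 1 - (2 * n + 1 - k) = k := by omega
      rw [hidx]; omega

lemma seq_neg' {k : ℕ} (hk : k ≤ 2 * n) :
    -seq n a k = seq n a ((2 * n + 1 - k) % (2 * n + 1)) := by
  rcases Nat.eq_zero_or_pos k with rfl | hk0
  · simp [seq_zero']
  by_cases hkn : k ≤ n
  · have hlt : 2 * n + 1 - k < 2 * n + 1 := by omega
    rw [Nat.mod_eq_of_lt hlt, seq_low hk0 hkn, seq_high (by omega) (by omega)]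
    have hidx : 2 * n + 1 - (2 * n + 1 - k) = k := by omega
    rw [hidx]
  · have hlt : 2 * n + 1 - k < 2 * n + 1 := by omega
    rw [Nat.mod_eq_of_lt hlt, seq_high (by omega) hk, seq_low (by omega) (by omega)]
    omega

end Aux

/-- Let `p` be the `(2n+1)`-cycle `(0, -1, …, -n, n, n-1, …, 1)` and
`s̃` the `(2n+1)`-cycle `(0, a₁, …, aₙ, -aₙ, …, -a₁)` on `[n]±`, where `|a₁|, …, |aₙ|`
is a permutation of `1, …, n`.  Then `n` and `aₙ` lie in the same cycle of `p ∘ s̃`. -/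
theorem stmt_7 (n : ℕ) (hn : 1 ≤ n) (a : ℕ → ℤ) (hsigned : IsSignedPerm n a)
    (p : Equiv.Perm (Ipm n))
    (hp : ∀ j : Ipm n, (p j : ℤ) = if (j : ℤ) = -(n : ℤ) then (n : ℤ) else (j : ℤ) - 1)
    (st : Equiv.Perm (Ipm n))
    (hst : ∀ k ≤ 2 * n, ∀ x : Ipm n, (x : ℤ) = seq n a k →
      ((st x : ℤ) = seq n a ((k + 1) % (2 * n + 1)))) :
    ∀ x y : Ipm n, (x : ℤ) = (n : ℤ) → (y : ℤ) = a n →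
      ∃ m : ℤ, ((p * st) ^ m) x = y := by
  intro x y hx hy
  haveI : NeZero (2 * n + 1) := ⟨by omega⟩
  haveI : Fact (1 < 2 * n + 1) := ⟨by omega⟩
  have hvlt : ∀ i : ZMod (2 * n + 1), i.val ≤ 2 * n := fun i => by
    have := ZMod.val_lt i; omega
  -- the parametrization of [n]± by ZMod (2n+1) through seq
  let T : ZMod (2 * n + 1) → Ipm n := fun i => ⟨seq n a i.val, seq_mem hsigned (hvlt i)⟩
  have hT_st : ∀ i, st (T i) = T (i + 1) := by
    intro i
    apply Subtype.ext
    have h1 := hst i.val (hvlt i) (T i) rfl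
    rw [h1]
    show seq n a ((i.val + 1) % (2 * n + 1)) = seq n a ((i + 1).val)
    congr 1
    rw [ZMod.val_add, ZMod.val_one]
  have hι_mem : ∀ z : Ipm n, -(z : ℤ) ∈ Finset.Icc (-(n : ℤ)) (n : ℤ) := fun z => by
    have hb := Finset.mem_Icc.mp z.2
    exact Finset.mem_Icc.mpr ⟨by omega, by omega⟩
  let ι : Equiv.Perm (Ipm n) :=
    { toFun := fun z => ⟨-(z : ℤ), hι_mem z⟩
      invFun := fun z => ⟨-(z : ℤ), hι_mem z⟩
      left_inv := fun z => Subtype.ext (by simp)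
      right_inv := fun z => Subtype.ext (by simp) }
  have hι : ∀ z : Ipm n, (ι z : ℤ) = -(z : ℤ) := fun z => rfl
  have hιι : ∀ z, ι (ι z) = z := fun z => Subtype.ext (by rw [hι, hι, neg_neg])
  have hT_neg : ∀ i, ι (T i) = T (-i) := by
    intro i
    apply Subtype.ext
    rw [hι]
    show -(seq n a i.val) = seq n a ((-i).val)
    rw [seq_neg' (hvlt i)]
    congr 1
  have hT_inj : ∀ i j, T i = T j → i = j := by
    intro i j h
    have h2 : seq n a i.val = seq n a j.val := congrArg Subtype.val h
    exact ZMod.val_injective _ (seq_inj hsigned (hvlt i) (hvlt j) h2)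
  have hT_surj : ∀ z : Ipm n, ∃ i, T i = z := by
    intro z
    have hz := Finset.mem_Icc.mp z.2
    obtain ⟨k, hk, hks⟩ := seq_surj hsigned hz.1 hz.2
    refine ⟨(k : ZMod (2 * n + 1)), Subtype.ext ?_⟩
    show seq n a ((k : ZMod (2 * n + 1)).val) = (z : ℤ)
    rw [ZMod.val_cast_of_lt (by omega)]
    exact hks
  set F := p * st with hF
  let τ : Equiv.Perm (Ipm n) := p * ι
  let σ : Equiv.Perm (Ipm n) := ι * st
  have hτdef : ∀ z, τ z = p (ι z) := fun z => rfl
  have hσdef : ∀ z, σ z = ι (st z) := fun z => rfl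
  have hkey : ∀ z, st (ι (st z)) = ι z := by
    intro z
    obtain ⟨i, rfl⟩ := hT_surj z
    rw [hT_st i, hT_neg (i + 1), hT_st (-(i + 1)), hT_neg i]
    congr 1
    ring
  have hτval : ∀ z : Ipm n, (τ z : ℤ) =
      if -(z : ℤ) = -(n : ℤ) then (n : ℤ) else -(z : ℤ) - 1 := by
    intro z; rw [hτdef, hp (ι z), hι]
  have hττ : ∀ z, τ (τ z) = z := by
    intro z
    apply Subtype.ext
    have hb := Finset.mem_Icc.mp z.2
    rw [hτval (τ z), hτval z]
    split_ifs <;> omega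
  have hτfix : ∀ z, τ z = z → z = x := by
    intro z h
    apply Subtype.ext
    have hb := Finset.mem_Icc.mp z.2
    have hv : (τ z : ℤ) = (z : ℤ) := congrArg Subtype.val h
    rw [hτval z] at hv
    rw [hx]
    split_ifs at hv <;> omega
  have hτx : τ x = x := by
    apply Subtype.ext
    rw [hτval x, hx]
    simp
  have hσfix : ∀ z, σ z = z → z = y := by
    intro z h
    obtain ⟨i, rfl⟩ := hT_surj z
    rw [hσdef, hT_st i, hT_neg (i + 1)] at h
    have heq : -(i + 1) = i := hT_inj _ _ h
    have h2 : ((2 * i.val + 1 : ℕ) : ZMod (2 * n + 1)) = 0 := by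
      push_cast
      rw [ZMod.natCast_rightInverse i]
      linear_combination -heq
    have hdvd : (2 * n + 1) ∣ (2 * i.val + 1) :=
      (ZMod.natCast_eq_zero_iff _ _).mp h2
    have hval : i.val = n := by
      have hlt := hvlt i
      have heqN := Nat.eq_of_dvd_of_lt_two_mul (by omega) hdvd (by omega)
      omega
    apply Subtype.ext
    show seq n a i.val = (y : ℤ)
    rw [hval, hy, seq_low hn (le_refl n)]
  have hτFσ : ∀ z, τ z = F (σ z) := by
    intro z
    show p (ι z) = p (st (ι (st z)))
    rw [hkey z]
  have hσFinv : ∀ z, σ z = F⁻¹ (τ z) := by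
    intro z; rw [hτFσ z]; simp
  have hτeq : τ = F * σ := Equiv.ext fun z => hτFσ z
  have hσσ : ∀ z, σ (σ z) = z := by
    intro z
    rw [hσdef (σ z), hσdef z, hkey z, hιι]
  have hσinv : σ * σ = 1 := Equiv.ext fun z => hσσ z
  have hτinv : τ * τ = 1 := Equiv.ext fun z => hττ z
  have hτ' : τ⁻¹ = τ := inv_eq_of_mul_eq_one_right hτinv
  have hσFσ : σ * F * σ = F⁻¹ := by
    have h1 : F * (σ * F * σ) = 1 := by
      have : (F * σ) * (F * σ) = 1 := by rw [← hτeq]; exact hτinv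
      calc F * (σ * F * σ) = (F * σ) * (F * σ) := by simp [mul_assoc]
      _ = 1 := this
    exact (inv_eq_of_mul_eq_one_right h1).symm
  have hconj : τ * F * τ = F⁻¹ := by
    have h2 : σ * F = F⁻¹ * σ := by
      calc σ * F = σ * F * (σ * σ) := by rw [hσinv, mul_one]
      _ = (σ * F * σ) * σ := by simp [mul_assoc]
      _ = F⁻¹ * σ := by rw [hσFσ]
    rw [hτeq]
    calc F * σ * F * (F * σ) = F * ((σ * F) * (F * σ)) := by simp [mul_assoc]
    _ = F * ((F⁻¹ * σ) * (F * σ)) := by rw [h2]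
    _ = σ * F * σ := by simp [mul_assoc]
    _ = F⁻¹ := hσFσ
  have hτzpow : ∀ m : ℤ, τ * F ^ m * τ = F ^ (-m) := by
    intro m
    calc τ * F ^ m * τ = τ * F ^ m * τ⁻¹ := by rw [hτ']
    _ = (τ * F * τ⁻¹) ^ m := conj_zpow.symm
    _ = (F⁻¹) ^ m := by rw [hτ', hconj]
    _ = F ^ (-m) := by group
  have happ : ∀ (A B : ℤ) (z : Ipm n), (F ^ A) ((F ^ B) z) = (F ^ (A + B)) z := by
    intro A B z
    rw [← Equiv.Perm.mul_apply, ← zpow_add]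
  have hτorb : ∀ m : ℤ, τ ((F ^ m) x) = (F ^ (-m)) x := by
    intro m
    have h := congrArg (fun g : Equiv.Perm (Ipm n) => g x) (hτzpow m)
    simpa [Equiv.Perm.mul_apply, hτx] using h
  have hσorb : ∀ m : ℤ, σ ((F ^ m) x) = (F ^ (-m - 1)) x := by
    intro m
    rw [hσFinv ((F ^ m) x), hτorb m]
    have h1 : F⁻¹ ((F ^ (-m)) x) = (F ^ ((-1 : ℤ) + (-m))) x := by
      rw [← happ (-1) (-m) x, zpow_neg_one]
    rw [h1]
    congr 1
    ring
  have hfin : ∃ k : ℕ, 0 < k ∧ (F ^ (k : ℤ)) x = x := by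
    refine ⟨orderOf F, orderOf_pos F, ?_⟩
    rw [zpow_natCast, pow_orderOf_eq_one]
    rfl
  set ℓ := Nat.find hfin with hℓdef
  have hℓ := Nat.find_spec hfin
  rcases Nat.even_or_odd ℓ with ⟨t, ht⟩ | ⟨t, ht⟩
  · exfalso
    have hcastℓ : (ℓ : ℤ) = t + t := by exact_mod_cast congrArg (Nat.cast : ℕ → ℤ) ht
    have h3 : (F ^ (-(t : ℤ))) x = (F ^ (t : ℤ)) x := by
      calc (F ^ (-(t : ℤ))) x = (F ^ (-(t : ℤ))) ((F ^ (ℓ : ℤ)) x) := by rw [hℓ.2]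
      _ = (F ^ (-(t : ℤ) + ℓ)) x := happ _ _ _
      _ = (F ^ (t : ℤ)) x := by rw [show -(t : ℤ) + ℓ = t by omega]
    have h1 : (F ^ (t : ℤ)) x = x := hτfix _ ((hτorb t).trans h3)
    have ht0 : 0 < t := by omega
    exact Nat.find_min hfin (show t < ℓ by omega) ⟨ht0, h1⟩
  · refine ⟨(t : ℤ), ?_⟩
    apply hσfix
    rw [hσorb t]
    have hcastℓ : (ℓ : ℤ) = 2 * t + 1 := by exact_mod_cast congrArg (Nat.cast : ℕ → ℤ) ht
    calc (F ^ (-(t : ℤ) - 1)) x = (F ^ (-(t : ℤ) - 1)) ((F ^ (ℓ : ℤ)) x) := by rw [hℓ.2]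
    _ = (F ^ (-(t : ℤ) - 1 + ℓ)) x := happ _ _ _
    _ = (F ^ (t : ℤ)) x := by rw [show -(t : ℤ) - 1 + ℓ = t by omega]
end

section
/- Let n ≥ 1 and let a be a signed permutation on [n]. Let p be the (2n+1)-cycle (0, −1, −2, …, −n, n, n−1, …, 1) on [n]± and let s̃(a) be the (2n+1)-cycle (0, a₁, …, aₙ, −aₙ, …, −a₁) on [n]±. Then the reversal distance of a satisfies d_r(a) ≥ (2n + 1 − C(p ∘ s̃(a))) / 2. -/
/-- The reversal `ρ_{i,j}` acting on the sequence `a`: it sends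
`a` to `a₁, …, a_{i-1}, -a_j, …, -a_i, a_{j+1}, …, aₙ`. -/
def reversal (i j : ℕ) (a : ℕ → ℤ) : ℕ → ℤ :=
  fun k => if i ≤ k ∧ k ≤ j then -a (i + j - k) else a k

/-- `a` can be transformed into the identity `1, 2, …, n` by `d` reversals. -/
def SortsIn (n : ℕ) (a : ℕ → ℤ) (d : ℕ) : Prop :=
  ∃ l : List (ℕ × ℕ), l.length = d ∧
    (∀ q ∈ l, 1 ≤ q.1 ∧ q.1 ≤ q.2 ∧ q.2 ≤ n) ∧
    ∀ k, 1 ≤ k → k ≤ n → (l.foldl (fun f q => reversal q.1 q.2 f) a) k = (k : ℤ)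

open Equiv Equiv.Perm

theorem Setoid.card_quotient_le_card_quotient_add_one {β : Type*} [Finite β] {r s : Setoid β}
    (y : β) (h : ∀ a b, r a b → ¬ s a y → ¬ s b y → s a b) :
    Nat.card (Quotient s) ≤ Nat.card (Quotient r) + 1 := by
  classical
  let F : Quotient s → Option (Quotient r) := fun q =>
    if q = ⟦y⟧ then none else some ⟦q.out⟧
  have hy : ∀ q : Quotient s, q ≠ ⟦y⟧ → ¬ s q.out y := fun q hq hs =>
    hq (by rw [← Quotient.out_eq q]; exact Quotient.sound hs)
  have hF : Function.Injective F := by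
    intro q q' hqq'
    by_cases hq : q = ⟦y⟧ <;> by_cases hq' : q' = ⟦y⟧
    · exact hq.trans hq'.symm
    · simp [F, hq, hq'] at hqq'
    · simp [F, hq, hq'] at hqq'
    · simp only [F, hq, hq', if_false, Option.some_inj] at hqq'
      rw [← Quotient.out_eq q, ← Quotient.out_eq q']
      exact Quotient.sound (h _ _ (Quotient.exact hqq') (hy q hq) (hy q' hq'))
  simpa using Nat.card_le_card_of_injective F hF

theorem Equiv.Perm.SameCycle.of_mul_swap {β : Type*} [DecidableEq β] [Finite β] {ψ : Perm β}
    {x y a b : β} (h : (ψ * swap x y).SameCycle a b) (ha : ¬ ψ.SameCycle a y)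
    (hb : ¬ ψ.SameCycle b y) : ψ.SameCycle a b := by
  let P c := ψ.SameCycle c x ∨ ψ.SameCycle c y
  -- the `ψ`-orbits with those of `x` and `y` merged; `ψ * swap x y` stays inside its classes
  let T c d := ψ.SameCycle c d ∨ P c ∧ P d
  have step : ∀ c, T c ((ψ * swap x y) c) := by
    intro c
    rw [mul_apply]
    by_cases hx : c = x
    · subst hx
      rw [swap_apply_left]
      exact Or.inr ⟨Or.inl .rfl, Or.inr (sameCycle_apply_left.2 .rfl)⟩
    by_cases hy : c = y
    · subst hy
      rw [swap_apply_right]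
      exact Or.inr ⟨Or.inr .rfl, Or.inl (sameCycle_apply_left.2 .rfl)⟩
    rw [swap_apply_of_ne_of_ne hx hy]
    exact Or.inl (sameCycle_apply_right.2 .rfl)
  have trans : ∀ c d e, T c d → T d e → T c e := by
    rintro c d e (hcd | ⟨hc, hd⟩) (hde | ⟨hd', he⟩)
    · exact Or.inl (hcd.trans hde)
    · exact Or.inr ⟨hd'.imp hcd.trans hcd.trans, he⟩
    · exact Or.inr ⟨hc, hd.imp hde.symm.trans hde.symm.trans⟩
    · exact Or.inr ⟨hc, he⟩
  have orbit : ∀ i : ℕ, T a (((ψ * swap x y) ^ i) a) := by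
    intro i
    induction i with
    | zero => exact Or.inl .rfl
    | succ i ih => rw [pow_succ', mul_apply]; exact trans _ _ _ ih (step _)
  obtain ⟨i, -, rfl⟩ := h.exists_pow_eq'
  rcases orbit i with h | ⟨hPa, hPb⟩
  · exact h
  · exact (hPa.resolve_right ha).trans (hPb.resolve_right hb).symm

theorem Equiv.permCongr_swap {α β : Type*} [DecidableEq α] [DecidableEq β] (e : α ≃ β)
    (x y : α) : e.permCongr (swap x y) = swap (e x) (e y) :=
  symm_trans_swap_trans x y e

section CycleCount
variable {α : Type*} [Fintype α] [DecidableEq α]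

theorem cycleCount_eq_card_quotient (π : Perm α) :
    cycleCount π = Nat.card (Quotient (SameCycle.setoid π)) := by
  let f : α → π.cycleFactorsFinset ⊕ {x // π x = x} := fun x =>
    if h : π x = x then .inr ⟨x, h⟩
    else .inl ⟨π.cycleOf x, cycleOf_mem_cycleFactorsFinset_iff.2 (mem_support.2 h)⟩
  have hker : Setoid.ker f = SameCycle.setoid π := by
    ext a b
    show f a = f b ↔ π.SameCycle a b
    by_cases ha : π a = a <;> by_cases hb : π b = b
    · simp only [f, ha, hb, dite_true, Sum.inr.injEq, Subtype.mk.injEq]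
      exact ⟨fun h => h ▸ .rfl, fun h => h.eq_of_left ha⟩
    · simp only [f, ha, hb, dite_true, dite_false, reduceCtorEq, false_iff]
      exact fun h => hb (h.apply_eq_self_iff.1 ha)
    · simp only [f, ha, hb, dite_true, dite_false, reduceCtorEq, false_iff]
      exact fun h => ha (h.apply_eq_self_iff.2 hb)
    · simp only [f, ha, hb, dite_false, Sum.inl.injEq, Subtype.mk.injEq]
      exact (sameCycle_iff_cycleOf_eq_of_mem_support (mem_support.2 ha) (mem_support.2 hb)).symm
  have hf : Function.Surjective f := by
    rintro (⟨c, hc⟩ | ⟨x, hx⟩)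
    · obtain ⟨x, hx⟩ := (mem_cycleFactorsFinset_iff.1 hc).1.nonempty_support
      have hπx : π x ≠ x := mem_support.1 (mem_cycleFactorsFinset_support_le hc hx)
      exact ⟨x, by simp only [f, hπx, dite_false, cycle_is_cycleOf hx hc]⟩
    · exact ⟨x, by simp only [f, hx, dite_true]⟩
  rw [← hker, Nat.card_congr (Setoid.quotientKerEquivOfSurjective f hf), Nat.card_sum,
    Nat.card_eq_fintype_card, Fintype.card_coe, Nat.card_eq_fintype_card, Fintype.card_subtype,
    cycleCount, cycleType_def, Multiset.card_map]
  rfl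

theorem cycleCount_mul_swap_le (ψ : Perm α) (x y : α) :
    cycleCount (ψ * swap x y) ≤ cycleCount ψ + 1 := by
  rw [cycleCount_eq_card_quotient, cycleCount_eq_card_quotient]
  refine Setoid.card_quotient_le_card_quotient_add_one y fun a b hab ha hb => ?_
  rw [← mul_swap_mul_self x y ψ] at hab
  exact hab.of_mul_swap ha hb

theorem cycleCount_one : cycleCount (1 : Perm α) = Fintype.card α := by
  simp [cycleCount, Finset.filter_true_of_mem, Finset.card_univ]

end CycleCount

section SignedPerm
variable {n : ℕ} {a : ℕ → ℤ}

theorem IsSignedPerm.abs_mem (ha : IsSignedPerm n a) {k : ℕ} (hk₁ : 1 ≤ k) (hk₂ : k ≤ n) :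
    |a k| ∈ Finset.Icc (1 : ℤ) n :=
  ha ▸ Finset.mem_image_of_mem _ (Finset.mem_Icc.2 ⟨hk₁, hk₂⟩)

theorem seq_mem_Icc (ha : IsSignedPerm n a) {k : ℕ} (hk : k ≤ 2 * n) :
    seq n a k ∈ Finset.Icc (-(n : ℤ)) n := by
  rw [Finset.mem_Icc]
  unfold seq
  split_ifs with h₀ h₁
  · omega
  · have := Finset.mem_Icc.1 (ha.abs_mem (by omega) h₁)
    constructor <;> linarith [neg_abs_le (a k), le_abs_self (a k)]
  · have := Finset.mem_Icc.1 (ha.abs_mem (k := 2 * n + 1 - k) (by omega) (by omega))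
    constructor <;> linarith [neg_abs_le (a (2 * n + 1 - k)), le_abs_self (a (2 * n + 1 - k))]

theorem exists_seq_eq (ha : IsSignedPerm n a) {v : ℤ} (hv : v ∈ Finset.Icc (-(n : ℤ)) n) :
    ∃ k ≤ 2 * n, seq n a k = v := by
  rcases eq_or_ne v 0 with rfl | hv₀
  · exact ⟨0, Nat.zero_le _, rfl⟩
  have : |v| ∈ Finset.Icc (1 : ℤ) n := by
    rw [Finset.mem_Icc] at hv ⊢
    constructor <;> cases abs_cases v <;> omega
  rw [← ha, Finset.mem_image] at this
  obtain ⟨m, hm, hmv⟩ := this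
  rw [Finset.mem_Icc] at hm
  rcases abs_eq_abs.1 hmv with h | h
  · exact ⟨m, by omega, by simp [seq, h, show m ≠ 0 by omega, hm.2]⟩
  · refine ⟨2 * n + 1 - m, by omega, ?_⟩
    simp [seq, show 2 * n + 1 - (2 * n + 1 - m) = m by omega, h, show 2 * n + 1 - m ≠ 0 by omega,
      show ¬ 2 * n + 1 - m ≤ n by omega]

theorem card_Ipm : Fintype.card (Ipm n) = 2 * n + 1 := by
  rw [Fintype.card_coe, Int.card_Icc]
  omega

noncomputable def seqEquiv (ha : IsSignedPerm n a) : Fin (2 * n + 1) ≃ Ipm n :=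
  Equiv.ofBijective (fun k => ⟨seq n a k, seq_mem_Icc ha (by omega)⟩) <| by
    rw [Fintype.bijective_iff_surjective_and_card, card_Ipm, Fintype.card_fin]
    refine ⟨fun v => ?_, rfl⟩
    obtain ⟨k, hk, hkv⟩ := exists_seq_eq ha v.2
    exact ⟨⟨k, by omega⟩, Subtype.ext hkv⟩

@[simp]
theorem coe_seqEquiv (ha : IsSignedPerm n a) (k : Fin (2 * n + 1)) :
    (seqEquiv ha k : ℤ) = seq n a k := rfl

/-- The cycle `s̃(a) = (0, a₁, …, aₙ, -aₙ, …, -a₁)`. -/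
noncomputable def seqCycle (ha : IsSignedPerm n a) : Perm (Ipm n) :=
  (seqEquiv ha).permCongr (finRotate (2 * n + 1))

theorem seqCycle_seqEquiv (ha : IsSignedPerm n a) (k : Fin (2 * n + 1)) :
    seqCycle ha (seqEquiv ha k) = seqEquiv ha (finRotate _ k) := by
  simp [seqCycle]

end SignedPerm

section Reversal
variable {n i j : ℕ} {a : ℕ → ℤ}

theorem abs_reversal (k : ℕ) :
    |reversal i j a k| = |a (if i ≤ k ∧ k ≤ j then i + j - k else k)| := by
  unfold reversal
  split_ifs <;> simp

theorem isSignedPerm_reversal (ha : IsSignedPerm n a) (h : 1 ≤ i ∧ i ≤ j ∧ j ≤ n) :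
    IsSignedPerm n (reversal i j a) := by
  set r : ℕ → ℕ := fun k => if i ≤ k ∧ k ≤ j then i + j - k else k
  have hr : Function.Involutive r := fun k => by simp only [r]; split_ifs <;> omega
  have hrI : (Finset.Icc 1 n).image r = Finset.Icc 1 n := by
    refine Finset.eq_of_subset_of_card_le (Finset.image_subset_iff.2 fun k hk => ?_)
      (Finset.card_image_of_injective _ hr.injective).ge
    simp only [Finset.mem_Icc, r] at hk ⊢
    split_ifs <;> omega
  unfold IsSignedPerm
  conv_rhs => rw [← ha, ← hrI, Finset.image_image]
  exact Finset.image_congr fun k _ => abs_reversal k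

/-- Position of the entry of `seq n a` that occupies position `k` of `seq n (reversal i j a)`:
the blocks `[i, j]` and `[2n+1-j, 2n+1-i]` of positions are interchanged. -/
def blockSwap (n i j k : ℕ) : ℕ :=
  if i ≤ k ∧ k ≤ j then 2 * n + 1 + k - (i + j)
  else if 2 * n + 1 - j ≤ k ∧ k ≤ 2 * n + 1 - i then i + j + k - (2 * n + 1) else k

theorem seq_reversal (h : 1 ≤ i ∧ i ≤ j ∧ j ≤ n) {k : ℕ} (hk : k ≤ 2 * n) :
    seq n (reversal i j a) k = seq n a (blockSwap n i j k) := by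
  unfold seq reversal blockSwap
  split_ifs <;> first
    | omega
    | (congr 1; omega)
    | (rw [neg_inj]; congr 1; omega)
    | (rw [neg_neg]; congr 1; omega)

theorem blockSwap_lt (h : 1 ≤ i ∧ i ≤ j ∧ j ≤ n) {k : ℕ} (hk : k < 2 * n + 1) :
    blockSwap n i j k < 2 * n + 1 := by
  unfold blockSwap
  split_ifs <;> omega

theorem blockSwap_blockSwap (h : 1 ≤ i ∧ i ≤ j ∧ j ≤ n) {k : ℕ} (hk : k < 2 * n + 1) :
    blockSwap n i j (blockSwap n i j k) = k := by
  unfold blockSwap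
  split_ifs <;> omega

def blockSwapPerm (h : 1 ≤ i ∧ i ≤ j ∧ j ≤ n) : Perm (Fin (2 * n + 1)) :=
  Function.Involutive.toPerm (fun k => ⟨blockSwap n i j k, blockSwap_lt h k.2⟩)
    fun k => Fin.ext (blockSwap_blockSwap h k.2)

@[simp]
theorem coe_blockSwapPerm (h : 1 ≤ i ∧ i ≤ j ∧ j ≤ n) (k : Fin (2 * n + 1)) :
    (blockSwapPerm h k : ℕ) = blockSwap n i j k := rfl

@[simp]
theorem blockSwapPerm_symm (h : 1 ≤ i ∧ i ≤ j ∧ j ≤ n) :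
    (blockSwapPerm h).symm = blockSwapPerm h := rfl

theorem permCongr_blockSwapPerm_finRotate (h : 1 ≤ i ∧ i ≤ j ∧ j ≤ n) :
    (blockSwapPerm h).permCongr (finRotate (2 * n + 1)) =
      finRotate (2 * n + 1) * swap ⟨i - 1, by omega⟩ ⟨2 * n - j, by omega⟩ *
        swap ⟨j, by omega⟩ ⟨2 * n + 1 - i, by omega⟩ := by
  ext k
  simp only [permCongr_apply, blockSwapPerm_symm, mul_apply, coe_blockSwapPerm, coe_finRotate,
    Fin.ext_iff, Fin.val_last, ← Fin.val_injective.swap_apply]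
  unfold blockSwap
  simp only [swap_apply_def]
  repeat' (first | omega | split)

theorem seqEquiv_reversal (ha : IsSignedPerm n a) (h : 1 ≤ i ∧ i ≤ j ∧ j ≤ n) :
    seqEquiv (isSignedPerm_reversal ha h) = (blockSwapPerm h).trans (seqEquiv ha) :=
  Equiv.ext fun k => Subtype.ext (seq_reversal h (Nat.lt_succ_iff.1 k.2))

theorem seqCycle_reversal (ha : IsSignedPerm n a) (h : 1 ≤ i ∧ i ≤ j ∧ j ≤ n) :
    ∃ u v w z : Ipm n,
      seqCycle (isSignedPerm_reversal ha h) = seqCycle ha * swap u v * swap w z := by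
  set e := seqEquiv ha
  have hconj : seqCycle (isSignedPerm_reversal ha h) =
      e.permCongr ((blockSwapPerm h).permCongr (finRotate _)) := by
    rw [seqCycle, seqEquiv_reversal ha h]
    rfl
  refine ⟨e ⟨i - 1, by omega⟩, e ⟨2 * n - j, by omega⟩, e ⟨j, by omega⟩,
    e ⟨2 * n + 1 - i, by omega⟩, ?_⟩
  rw [hconj, permCongr_blockSwapPerm_finRotate, permCongr_mul, permCongr_mul, permCongr_swap,
    permCongr_swap]
  rfl

end Reversal

section Sorted
variable {n : ℕ} {a : ℕ → ℤ}

theorem seq_of_sorted (hsorted : ∀ k, 1 ≤ k → k ≤ n → a k = k) {m : ℕ}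
    (hm : m ≤ 2 * n) : seq n a m = if m ≤ n then (m : ℤ) else m - (2 * n + 1) := by
  unfold seq
  split_ifs with h₀ h₁ h₁
  · omega
  · omega
  · exact hsorted m (by omega) h₁
  · rw [hsorted _ (by omega) (by omega)]
    omega

theorem mul_seqCycle_eq_one_of_sorted (p : Perm (Ipm n))
    (hp : ∀ j : Ipm n, (p j : ℤ) = if (j : ℤ) = -(n : ℤ) then (n : ℤ) else (j : ℤ) - 1)
    (ha : IsSignedPerm n a) (hsorted : ∀ k, 1 ≤ k → k ≤ n → a k = k) :
    p * seqCycle ha = 1 := by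
  ext x
  obtain ⟨k, rfl⟩ := (seqEquiv ha).surjective x
  rw [mul_apply, seqCycle_seqEquiv, one_apply, hp, coe_seqEquiv, coe_seqEquiv,
    seq_of_sorted hsorted (Nat.lt_succ_iff.1 (finRotate _ k).2),
    seq_of_sorted hsorted (Nat.lt_succ_iff.1 k.2),
    coe_finRotate]
  simp only [Fin.ext_iff, Fin.val_last]
  split_ifs <;> omega

theorem eq_seqCycle (ha : IsSignedPerm n a) (st : Perm (Ipm n))
    (hst : ∀ k ≤ 2 * n, ∀ x : Ipm n, (x : ℤ) = seq n a k →
      ((st x : ℤ) = seq n a ((k + 1) % (2 * n + 1)))) :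
    st = seqCycle ha := by
  ext x
  obtain ⟨k, rfl⟩ := (seqEquiv ha).surjective x
  rw [hst k (by omega) _ rfl, seqCycle_seqEquiv, coe_seqEquiv, coe_finRotate]
  congr 1
  split_ifs with hk
  · simp [hk, Nat.mod_self]
  · exact Nat.mod_eq_of_lt (by have := Fin.val_lt_last hk; omega)

theorem le_two_mul_length_add_cycleCount (p : Perm (Ipm n))
    (hp : ∀ j : Ipm n, (p j : ℤ) = if (j : ℤ) = -(n : ℤ) then (n : ℤ) else (j : ℤ) - 1)
    (l : List (ℕ × ℕ)) (hl : ∀ q ∈ l, 1 ≤ q.1 ∧ q.1 ≤ q.2 ∧ q.2 ≤ n)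
    (ha : IsSignedPerm n a)
    (hsorted : ∀ k, 1 ≤ k → k ≤ n → (l.foldl (fun f q => reversal q.1 q.2 f) a) k = k) :
    2 * n + 1 ≤ 2 * l.length + cycleCount (p * seqCycle ha) := by
  induction l generalizing a with
  | nil =>
    rw [mul_seqCycle_eq_one_of_sorted p hp ha hsorted, cycleCount_one, card_Ipm]
    simp
  | cons q l ih =>
    have hq := hl q List.mem_cons_self
    have hrest := ih (fun r hr => hl r (List.mem_cons_of_mem _ hr))
      (isSignedPerm_reversal ha hq) hsorted
    obtain ⟨u, v, w, z, hρ⟩ := seqCycle_reversal ha hq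
    rw [hρ, ← mul_assoc, ← mul_assoc] at hrest
    have h₁ := cycleCount_mul_swap_le (p * seqCycle ha * swap u v) w z
    have h₂ := cycleCount_mul_swap_le (p * seqCycle ha) u v
    rw [List.length_cons]
    omega

end Sorted

theorem stmt_8_general (n : ℕ) (a : ℕ → ℤ) (hsigned : IsSignedPerm n a)
    (p : Equiv.Perm (Ipm n))
    (hp : ∀ j : Ipm n, (p j : ℤ) = if (j : ℤ) = -(n : ℤ) then (n : ℤ) else (j : ℤ) - 1)
    (st : Equiv.Perm (Ipm n))
    (hst : ∀ k ≤ 2 * n, ∀ x : Ipm n, (x : ℤ) = seq n a k →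
      ((st x : ℤ) = seq n a ((k + 1) % (2 * n + 1)))) :
    ∀ d : ℕ, SortsIn n a d → 2 * n + 1 ≤ 2 * d + cycleCount (p * st) := by
  rintro d ⟨l, rfl, hl, hsorted⟩
  rw [eq_seqCycle hsigned st hst]
  exact le_two_mul_length_add_cycleCount p hp l hl hsigned hsorted

/-- Let `p` be the `(2n+1)`-cycle `(0, -1, …, -n, n, n-1, …, 1)` and
`s̃(a)` the `(2n+1)`-cycle `(0, a₁, …, aₙ, -aₙ, …, -a₁)` on `[n]±`, for a signed
permutation `a`.  Then the reversal distance of `a` satisfies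
`d_r(a) ≥ (2n + 1 - C(p ∘ s̃(a))) / 2`, i.e. every `d` such that `a` is sortable in
`d` reversals satisfies `2n + 1 ≤ 2d + C(p ∘ s̃(a))`. -/
theorem stmt_8 (n : ℕ) (hn : 1 ≤ n) (a : ℕ → ℤ) (hsigned : IsSignedPerm n a)
    (p : Equiv.Perm (Ipm n))
    (hp : ∀ j : Ipm n, (p j : ℤ) = if (j : ℤ) = -(n : ℤ) then (n : ℤ) else (j : ℤ) - 1)
    (st : Equiv.Perm (Ipm n))
    (hst : ∀ k ≤ 2 * n, ∀ x : Ipm n, (x : ℤ) = seq n a k →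
      ((st x : ℤ) = seq n a ((k + 1) % (2 * n + 1)))) :
    ∀ d : ℕ, SortsIn n a d → 2 * n + 1 ≤ 2 * d + cycleCount (p * st) :=
  stmt_8_general n a hsigned p hp st hst
end

section
/- Let n ≥ 1 and let a be a signed permutation on [n]. On the set [n]± ∪ {−(n+1)}, let θ₂ be the fixed-point-free involution (0, −1)(1, −2)⋯(n, −n−1), and let θ₁ be the fixed-point-free involution (b₀, b₁)(b₂, b₃)⋯(b_{2n}, b_{2n+1}), where b₀ = 0, b_{2k−1} = −a_k and b_{2k} = a_k for 1 ≤ k ≤ n, and b_{2n+1} = −(n+1). Then the reversal distance of a satisfies d_r(a) ≥ (2n + 2 − C(θ₁ ∘ θ₂)) / 2. -/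
/-!
Write `b` for the sequence `0, -a₁, a₁, -a₂, a₂, …, -aₙ, aₙ, -(n+1)`, so that `θ₁` pairs `b_{2k}`
with `b_{2k+1}`. The reversal `ρ_{i,j}` reverses the window `b_{2i-1}, …, b_{2j}` of `b`; this keeps
every pair except the two straddling the ends of the window, so the pairing of the reversed
sequence is `θ₁` conjugated by the transposition of `b_{2i-1}` and `b_{2j}`. Hence each reversal
multiplies `θ₁ θ₂` by a transposition on each side and changes its number of cycles by at most
two. For the identity the pairing is `θ₂` itself and `θ₂ θ₂ = 1` has `2n + 2` cycles.
-/

open Equiv Equiv.Perm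

section CycleCount

variable {α : Type*} [Fintype α] [DecidableEq α]

theorem ncard_range_le_cycleCount {β : Type*} (π : Perm α) (f : α → β)
    (hf : ∀ x, f (π x) = f x) : (Set.range f).ncard ≤ cycleCount π := by
  have hconst : ∀ x y, π.SameCycle x y → f x = f y := by
    have hpow : ∀ (k : ℕ) x, f ((π ^ k) x) = f x := by
      intro k x
      induction k with
      | zero => rfl
      | succ k ih => rw [pow_succ', mul_apply, hf, ih]
    intro x y h
    obtain ⟨k, -, rfl⟩ := h.exists_pow_eq'
    exact (hpow k x).symm
  rw [← Set.range_quotient_lift (s := SameCycle.setoid π) hconst, cycleCount_eq_card_quotient,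
    ← Nat.card_coe_set_eq]
  exact Finite.card_range_le _

theorem cycleCount_le_swap_mul_add_one (π : Perm α) (x y : α) :
    cycleCount π ≤ cycleCount (swap x y * π) + 1 := by
  classical
  let q : α → Quotient (SameCycle.setoid π) := Quotient.mk _
  have hq : ∀ z, q (π z) = q z := fun z => Quotient.sound (sameCycle_apply_left.2 (.refl _ _))
  -- `g ∘ q` merges the cycles of `x` and `y`; it is constant along the cycles of `swap x y * π`,
  -- whose steps either follow `π` or jump between `x` and `y`.
  let g : Quotient (SameCycle.setoid π) → Quotient (SameCycle.setoid π) := fun c =>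
    if c = q y then q x else c
  have hg : ∀ z, g (q ((swap x y * π) z)) = g (q z) := by
    intro z
    rw [mul_apply, ← hq z]
    rcases eq_or_ne (π z) x with hx | hx
    · simp [g, hx]
    rcases eq_or_ne (π z) y with hy | hy
    · simp [g, hy]
    · rw [swap_apply_of_ne_of_ne hx hy]
  have hcover : ∀ c, c ∈ Set.range (g ∘ q) ∪ {q y} := by
    refine Quotient.ind fun z => ?_
    by_cases hz : q z = q y
    · exact Or.inr hz
    · exact Or.inl ⟨z, if_neg hz⟩
  calc cycleCount π = (Set.univ : Set (Quotient (SameCycle.setoid π))).ncard := by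
        rw [cycleCount_eq_card_quotient, Set.ncard_univ]
    _ ≤ (Set.range (g ∘ q) ∪ {q y}).ncard := Set.ncard_le_ncard fun c _ => hcover c
    _ ≤ (Set.range (g ∘ q)).ncard + 1 :=
        (Set.ncard_union_le _ _).trans_eq (by rw [Set.ncard_singleton])
    _ ≤ cycleCount (swap x y * π) + 1 := by gcongr; exact ncard_range_le_cycleCount _ (g ∘ q) hg

theorem cycleCount_swap_mul_le (π : Perm α) (x y : α) :
    cycleCount (swap x y * π) ≤ cycleCount π + 1 := by
  simpa [← mul_assoc] using cycleCount_le_swap_mul_add_one (swap x y * π) x y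

theorem cycleCount_swap_mul_mul_swap_le (π : Perm α) (x y u v : α) :
    cycleCount (swap x y * π * swap u v) ≤ cycleCount π + 2 := by
  rw [mul_swap_eq_swap_mul]
  calc _ ≤ cycleCount (swap x y * π) + 1 := cycleCount_swap_mul_le _ _ _
    _ ≤ cycleCount π + 2 := by linarith [cycleCount_swap_mul_le π x y]

theorem cycleCount_swap_mul_mul_swap_mul_le (σ τ : Perm α) (x y : α) :
    cycleCount (swap x y * σ * swap x y * τ) ≤ cycleCount (σ * τ) + 2 := by
  have h : swap x y * σ * swap x y * τ = swap x y * (σ * τ) * swap (τ⁻¹ x) (τ⁻¹ y) := by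
    rw [swap_apply_apply, inv_inv]
    group
  rw [h]
  exact cycleCount_swap_mul_mul_swap_le _ _ _ _ _

end CycleCount

def mate (m : ℕ) : ℕ := if m % 2 = 0 then m + 1 else m - 1

def reflectIcc (p q m : ℕ) : ℕ := if p ≤ m ∧ m ≤ q then p + q - m else m

theorem reflectIcc_involutive (p q : ℕ) : Function.Involutive (reflectIcc p q) := by
  intro m
  simp only [reflectIcc]
  split_ifs <;> omega

theorem bijOn_reflectIcc {p q N : ℕ} (hqN : q ≤ N) :
    Set.BijOn (reflectIcc p q) (Finset.Iic N) (Finset.Iic N) := by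
  have hmaps : Set.MapsTo (reflectIcc p q) (Finset.Iic N) (Finset.Iic N) := by
    intro m hm
    simp only [Finset.coe_Iic, Set.mem_Iic, reflectIcc] at hm ⊢
    split_ifs <;> omega
  have hinv := reflectIcc_involutive p q
  exact Set.InvOn.bijOn ⟨fun m _ => hinv m, fun m _ => hinv m⟩ hmaps hmaps

theorem swap_mate_swap_reflectIcc {p q : ℕ} (hp : p % 2 = 1) (hq : q % 2 = 0) (hpq : p ≤ q)
    (m : ℕ) : swap p q (mate (swap p q (reflectIcc p q m))) = reflectIcc p q (mate m) := by
  simp only [swap_apply_def, mate, reflectIcc]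
  split_ifs <;> omega

section bseq

variable {n : ℕ} {a : ℕ → ℤ}

@[simp] theorem bseq_zero : bseq n a 0 = 0 := rfl

@[simp] theorem bseq_last : bseq n a (2 * n + 1) = -((n : ℤ) + 1) := by
  simp [bseq]

theorem bseq_even {k : ℕ} (hk : 1 ≤ k) : bseq n a (2 * k) = a k := by
  simp only [bseq]
  split_ifs <;> first | omega | (congr 1; omega)

theorem bseq_odd {k : ℕ} (hkn : k < n) : bseq n a (2 * k + 1) = -a (k + 1) := by
  rw [bseq, if_neg (by omega), if_neg (by omega), if_pos (by omega),
    show (2 * k + 1 + 1) / 2 = k + 1 by omega]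

theorem bseq_of_sorted (ha : ∀ k, 1 ≤ k → k ≤ n → a k = k) {m : ℕ} (hm : m ≤ 2 * n + 1) :
    bseq n a m = if m % 2 = 0 then ((m / 2 : ℕ) : ℤ) else -((m + 1) / 2 : ℕ) := by
  simp only [bseq]
  split_ifs <;> (try rw [ha _ (by omega) (by omega)]) <;> push_cast <;> omega

theorem bseq_reversal {i j : ℕ} (a : ℕ → ℤ) (hi : 1 ≤ i) (hj : j ≤ n) :
    bseq n (reversal i j a) = bseq n a ∘ reflectIcc (2 * i - 1) (2 * j) := by
  funext m
  simp only [Function.comp_apply, bseq, reversal, reflectIcc]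
  split_ifs <;> (try simp only [neg_neg, neg_inj]) <;> first | omega | (congr 1; omega)

namespace IsSignedPerm

variable (hs : IsSignedPerm n a)
include hs

theorem abs_mem_s9 {k : ℕ} (hk1 : 1 ≤ k) (hkn : k ≤ n) : |a k| ∈ Finset.Icc (1 : ℤ) n :=
  hs ▸ Finset.mem_image_of_mem _ (Finset.mem_Icc.2 ⟨hk1, hkn⟩)

theorem bseq_mapsTo :
    Set.MapsTo (bseq n a) (Finset.Iic (2 * n + 1)) (Finset.Icc (-(n : ℤ) - 1) n) := by
  intro m hm
  simp only [Finset.coe_Iic, Set.mem_Iic, Finset.coe_Icc, Set.mem_Icc] at hm ⊢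
  obtain ⟨k, rfl | rfl⟩ := Nat.even_or_odd' m
  · rcases Nat.eq_zero_or_pos k with rfl | hk
    · simp
    have := Finset.mem_Icc.1 (hs.abs_mem_s9 hk (by omega))
    rw [bseq_even hk]
    constructor <;> linarith [neg_abs_le (a k), le_abs_self (a k)]
  · rcases eq_or_lt_of_le (show k ≤ n by omega) with rfl | hk
    · rw [bseq_last]; omega
    have := Finset.mem_Icc.1 (hs.abs_mem_s9 (by omega) hk)
    rw [bseq_odd hk]
    constructor <;> linarith [neg_abs_le (a (k + 1)), le_abs_self (a (k + 1))]

theorem bseq_surjOn :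
    Set.SurjOn (bseq n a) (Finset.Iic (2 * n + 1)) (Finset.Icc (-(n : ℤ) - 1) n) := by
  intro t ht
  simp only [Finset.coe_Iic, Finset.coe_Icc, Set.mem_Icc, Set.mem_image, Set.mem_Iic] at ht ⊢
  by_cases h0 : t = 0
  · exact ⟨0, by omega, by simp [h0]⟩
  by_cases hlast : t = -(n : ℤ) - 1
  · exact ⟨2 * n + 1, le_rfl, by rw [bseq_last, hlast]; ring⟩
  have habs : |t| ∈ Finset.Icc (1 : ℤ) n := by
    rw [Finset.mem_Icc]
    constructor <;> cases abs_cases t <;> omega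
  rw [← hs, Finset.mem_image] at habs
  obtain ⟨k, hk, hak⟩ := habs
  rw [Finset.mem_Icc] at hk
  rcases abs_eq_abs.1 hak with h | h
  · exact ⟨2 * k, by omega, by rw [bseq_even hk.1, h]⟩
  · refine ⟨2 * (k - 1) + 1, by omega, ?_⟩
    rw [bseq_odd (by omega), Nat.sub_add_cancel hk.1, h, neg_neg]

theorem bseq_bijOn :
    Set.BijOn (bseq n a) (Finset.Iic (2 * n + 1)) (Finset.Icc (-(n : ℤ) - 1) n) :=
  ⟨hs.bseq_mapsTo,
    Finset.injOn_of_surjOn_of_card_le _ hs.bseq_mapsTo hs.bseq_surjOn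
      (by rw [Nat.card_Iic, Int.card_Icc]; omega),
    hs.bseq_surjOn⟩

end IsSignedPerm

end bseq

theorem swap_apply_eq_of_injOn {α β γ : Type*} [DecidableEq α] [DecidableEq γ] {e : γ → β}
    (he : Function.Injective e) {b : α → β} {s : Set α} (hb : Set.InjOn b s) {p q r : α}
    (hp : p ∈ s) (hq : q ∈ s) (hr : r ∈ s) {v w z : γ} (hv : e v = b p) (hw : e w = b q)
    (hz : e z = b r) : e (swap v w z) = b (swap p q r) := by
  have hzv : z = v ↔ r = p := by rw [← he.eq_iff, hz, hv, hb.eq_iff hr hp]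
  have hzw : z = w ↔ r = q := by rw [← he.eq_iff, hz, hw, hb.eq_iff hr hq]
  simp only [swap_apply_def, hzv, hzw]
  split_ifs <;> assumption

/-- `θ` is the involution `(b₀,b₁)(b₂,b₃)⋯(b_{2n},b_{2n+1})` of `[n]± ∪ {-(n+1)}`. -/
def IsPairing (n : ℕ) (b : ℕ → ℤ) (θ : Perm (Jpm n)) : Prop :=
  ∀ m ≤ 2 * n + 1, ∀ x : Jpm n, (x : ℤ) = b m → (θ x : ℤ) = b (mate m)

theorem isPairing_of_forall {n : ℕ} {b : ℕ → ℤ} {θ : Perm (Jpm n)}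
    (hb : Set.MapsTo b (Finset.Iic (2 * n + 1)) (Finset.Icc (-(n : ℤ) - 1) n))
    (h : ∀ k ≤ n, ∀ x y : Jpm n, (x : ℤ) = b (2 * k) → (y : ℤ) = b (2 * k + 1) →
      θ x = y ∧ θ y = x) :
    IsPairing n b θ := by
  intro m hm x hx
  have hmem : ∀ m' ≤ 2 * n + 1, b m' ∈ Finset.Icc (-(n : ℤ) - 1) n := fun m' hm' =>
    hb (by simpa using hm')
  obtain ⟨k, rfl | rfl⟩ := Nat.even_or_odd' m
  · rw [(h k (by omega) x ⟨_, hmem (2 * k + 1) (by omega)⟩ hx rfl).1]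
    simp [mate]
  · rw [(h k (by omega) ⟨_, hmem (2 * k) (by omega)⟩ x rfl hx).2]
    simp [mate, Nat.add_mod]

namespace IsPairing

variable {n : ℕ} {θ : Perm (Jpm n)}

theorem swap_mul_mul_swap {b : ℕ → ℤ} (hθ : IsPairing n b θ)
    (hb : Set.InjOn b (Finset.Iic (2 * n + 1))) {p q : ℕ} (hp : p % 2 = 1) (hq : q % 2 = 0)
    (hpq : p ≤ q) (hqn : q ≤ 2 * n + 1) {v w : Jpm n} (hv : (v : ℤ) = b p)
    (hw : (w : ℤ) = b q) :
    IsPairing n (b ∘ reflectIcc p q) (swap v w * θ * swap v w) := by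
  have hswap : ∀ {z : Jpm n} {r : ℕ}, r ≤ 2 * n + 1 → (z : ℤ) = b r →
      ((swap v w z : Jpm n) : ℤ) = b (swap p q r) := fun hr hz =>
    swap_apply_eq_of_injOn Subtype.val_injective hb (by simpa using hpq.trans hqn)
      (by simpa using hqn) (by simpa using hr) hv hw hz
  have hswap_le : ∀ r ≤ 2 * n + 1, swap p q r ≤ 2 * n + 1 := by
    intro r hr
    rw [swap_apply_def]
    split_ifs <;> omega
  have hmate_le : ∀ r ≤ 2 * n + 1, mate r ≤ 2 * n + 1 := by
    intro r hr
    unfold mate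
    split_ifs <;> omega
  have hrefl_le : ∀ m ≤ 2 * n + 1, reflectIcc p q m ≤ 2 * n + 1 := fun m hm =>
    by simpa using (bijOn_reflectIcc hqn).mapsTo (by simpa using hm)
  intro m hm x hx
  have hx' := hswap (hrefl_le m hm) hx
  rw [mul_apply, mul_apply, hswap (hmate_le _ (hswap_le _ (hrefl_le m hm)))
    (hθ _ (hswap_le _ (hrefl_le m hm)) _ hx'), swap_mate_swap_reflectIcc hp hq hpq,
    Function.comp_apply]

theorem apply_of_sorted {a : ℕ → ℤ} (hθ : IsPairing n (bseq n a) θ)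
    (ha : ∀ k, 1 ≤ k → k ≤ n → a k = k) (x : Jpm n) : (θ x : ℤ) = -x - 1 := by
  obtain ⟨hlo, hhi⟩ := Finset.mem_Icc.1 x.2
  obtain ⟨m, hm, hx⟩ : ∃ m ≤ 2 * n + 1, (x : ℤ) = bseq n a m := by
    rcases le_or_gt 0 (x : ℤ) with h | h
    · refine ⟨2 * (x : ℤ).toNat, by omega, ?_⟩
      rw [bseq_of_sorted ha (by omega)]
      simp only [Nat.mul_mod_right, if_true]
      omega
    · refine ⟨2 * (-(x : ℤ) - 1).toNat + 1, by omega, ?_⟩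
      rw [bseq_of_sorted ha (by omega), if_neg (by omega)]
      omega
  have hmate : mate m ≤ 2 * n + 1 := by unfold mate; split_ifs <;> omega
  rw [hθ m hm x hx, hx, bseq_of_sorted ha hm, bseq_of_sorted ha hmate]
  unfold mate
  split_ifs <;> omega

end IsPairing

theorem two_mul_add_two_le_of_foldl_reversal {n : ℕ} (θ₂ : Perm (Jpm n))
    (hθ₂ : ∀ x : Jpm n, (θ₂ x : ℤ) = -(x : ℤ) - 1) (l : List (ℕ × ℕ))
    (hl : ∀ r ∈ l, 1 ≤ r.1 ∧ r.1 ≤ r.2 ∧ r.2 ≤ n) (a : ℕ → ℤ) (θ : Perm (Jpm n))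
    (hb : Set.BijOn (bseq n a) (Finset.Iic (2 * n + 1)) (Finset.Icc (-(n : ℤ) - 1) n))
    (hθ : IsPairing n (bseq n a) θ)
    (hsorted : ∀ k, 1 ≤ k → k ≤ n → (l.foldl (fun f r => reversal r.1 r.2 f) a) k = (k : ℤ)) :
    2 * n + 2 ≤ 2 * l.length + cycleCount (θ * θ₂) := by
  induction l generalizing a θ with
  | nil =>
    have hθθ₂ : θ * θ₂ = 1 := by
      ext x
      simp [hθ.apply_of_sorted hsorted, hθ₂]
    rw [hθθ₂, cycleCount_one, Fintype.card_coe, Int.card_Icc, List.length_nil]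
    omega
  | cons r l ih =>
    obtain ⟨i, j⟩ := r
    obtain ⟨hi, hij, hj⟩ := hl (i, j) List.mem_cons_self
    have hmem : ∀ m ≤ 2 * n + 1, bseq n a m ∈ Finset.Icc (-(n : ℤ) - 1) n := fun m hm =>
      hb.mapsTo (by simpa using hm)
    let v : Jpm n := ⟨bseq n a (2 * i - 1), hmem _ (by omega)⟩
    let w : Jpm n := ⟨bseq n a (2 * j), hmem _ (by omega)⟩
    have hb' : Set.BijOn (bseq n (reversal i j a)) (Finset.Iic (2 * n + 1))
        (Finset.Icc (-(n : ℤ) - 1) n) :=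
      bseq_reversal a hi hj ▸ hb.comp (bijOn_reflectIcc (by omega))
    have hθ' : IsPairing n (bseq n (reversal i j a)) (swap v w * θ * swap v w) :=
      bseq_reversal a hi hj ▸
        hθ.swap_mul_mul_swap hb.injOn (by omega) (by omega) (by omega) (by omega) rfl rfl
    have hrest := ih (fun r hr => hl r (List.mem_cons_of_mem _ hr)) _ _ hb' hθ' hsorted
    have hcc := cycleCount_swap_mul_mul_swap_mul_le θ θ₂ v w
    simp only [List.length_cons]
    omega

theorem stmt_9_general (n : ℕ) (a : ℕ → ℤ) (hsigned : IsSignedPerm n a)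
    (θ₁ θ₂ : Equiv.Perm (Jpm n))
    (hθ₂ : ∀ x : Jpm n, (θ₂ x : ℤ) = -(x : ℤ) - 1)
    (hθ₁ : ∀ k ≤ n, ∀ x y : Jpm n,
      (x : ℤ) = bseq n a (2 * k) → (y : ℤ) = bseq n a (2 * k + 1) →
      θ₁ x = y ∧ θ₁ y = x) :
    ∀ d : ℕ, SortsIn n a d → 2 * n + 2 ≤ 2 * d + cycleCount (θ₁ * θ₂) := by
  rintro d ⟨l, rfl, hvalid, hsorted⟩
  have hb := hsigned.bseq_bijOn
  exact two_mul_add_two_le_of_foldl_reversal θ₂ hθ₂ l hvalid a θ₁ hb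
    (isPairing_of_forall hb.mapsTo hθ₁) hsorted

/-- On `[n]± ∪ {-(n+1)}`, let `θ₂` be the fixed-point-free involution
`(0,-1)(1,-2)⋯(n,-n-1)`, i.e. `θ₂(x) = -x-1`, and let `θ₁` be the fixed-point-free
involution `(b₀,b₁)(b₂,b₃)⋯(b_{2n},b_{2n+1})`, for a signed permutation `a`.  Then the
reversal distance of `a` satisfies `d_r(a) ≥ (2n + 2 - C(θ₁ ∘ θ₂)) / 2`, i.e. every `d`
such that `a` is sortable in `d` reversals satisfies `2n + 2 ≤ 2d + C(θ₁ ∘ θ₂)`. -/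
theorem stmt_9 (n : ℕ) (hn : 1 ≤ n) (a : ℕ → ℤ) (hsigned : IsSignedPerm n a)
    (θ₁ θ₂ : Equiv.Perm (Jpm n))
    (hθ₂ : ∀ x : Jpm n, (θ₂ x : ℤ) = -(x : ℤ) - 1)
    (hθ₁ : ∀ k ≤ n, ∀ x y : Jpm n,
      (x : ℤ) = bseq n a (2 * k) → (y : ℤ) = bseq n a (2 * k + 1) →
      θ₁ x = y ∧ θ₁ y = x) :
    ∀ d : ℕ, SortsIn n a d → 2 * n + 2 ≤ 2 * d + cycleCount (θ₁ * θ₂) :=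
  stmt_9_general n a hsigned θ₁ θ₂ hθ₂ hθ₁
end

section
/- Let n ≥ 1, let a = a₁⋯aₙ be a signed permutation on [n], and for 1 ≤ i ≤ j ≤ n let a′ = ρ_{i,j} ⋄ a be the result of applying the reversal ρ_{i,j} to a. Define the sequence s(a) = s₀ s₁ ⋯ s_{2n} on [n]± by s₀ = 0, s_k = a_k for 1 ≤ k ≤ n, and s_k = −a_{2n+1−k} for n+1 ≤ k ≤ 2n. Then s(a′) is obtained from s(a) by interchanging the block (s_i, …, s_j) with the block (s_{2n+1−j}, …, s_{2n+1−i}): explicitly, s(a′)_k = s(a)_{k + (2n+1−i−j)} for i ≤ k ≤ j, s(a′)_k = s(a)_{k − (2n+1−i−j)} for 2n+1−j ≤ k ≤ 2n+1−i, and s(a′)_k = s(a)_k for all other 0 ≤ k ≤ 2n. -/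
/-- Let `a` be a signed permutation on `[n]`, `1 ≤ i ≤ j ≤ n`, and let
`a' = ρ_{i,j} ⋄ a` be the result of applying the reversal `ρ_{i,j}` to `a`.  Then
`s(a')` is obtained from `s(a)` by interchanging the block `(s_i, …, s_j)` with the
block `(s_{2n+1-j}, …, s_{2n+1-i})`. -/
theorem stmt_13 (n i j : ℕ) (hn : 1 ≤ n) (a : ℕ → ℤ) (hsigned : IsSignedPerm n a)
    (hi : 1 ≤ i) (hij : i ≤ j) (hjn : j ≤ n)
    (a' : ℕ → ℤ)
    (ha' : ∀ k, a' k = if i ≤ k ∧ k ≤ j then -a (i + j - k) else a k) :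
    ∀ k ≤ 2 * n,
      (i ≤ k ∧ k ≤ j → seq n a' k = seq n a (k + (2 * n + 1 - i - j))) ∧
      (2 * n + 1 - j ≤ k ∧ k ≤ 2 * n + 1 - i →
        seq n a' k = seq n a (k - (2 * n + 1 - i - j))) ∧
      ((k < i ∨ (j < k ∧ k < 2 * n + 1 - j) ∨ 2 * n + 1 - i < k) →
        seq n a' k = seq n a k) := by
  intro k hk
  refine ⟨?_, ?_, ?_⟩
  · rintro ⟨h1, h2⟩
    have hk0 : ¬ k = 0 := by omega
    have hkn : k ≤ n := by omega
    simp only [seq]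
    rw [if_neg hk0, if_pos hkn, ha', if_pos ⟨h1, h2⟩,
      if_neg (by omega), if_neg (by omega),
      (by omega : 2 * n + 1 - (k + (2 * n + 1 - i - j)) = i + j - k)]
  · rintro ⟨h1, h2⟩
    have ht1 : i ≤ 2 * n + 1 - k := by omega
    have ht2 : 2 * n + 1 - k ≤ j := by omega
    simp only [seq]
    rw [if_neg (by omega : ¬ k = 0), if_neg (by omega : ¬ k ≤ n), ha',
      if_pos ⟨ht1, ht2⟩, if_neg (by omega), if_pos (by omega : k - (2*n+1-i-j) ≤ n),
      neg_neg, (by omega : i + j - (2 * n + 1 - k) = k - (2 * n + 1 - i - j))]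
  · intro h
    simp only [seq]
    by_cases hk0 : k = 0
    · rw [if_pos hk0, if_pos hk0]
    by_cases hkn : k ≤ n
    · rw [if_neg hk0, if_neg hk0, if_pos hkn, if_pos hkn, ha',
        if_neg (by omega)]
    · rw [if_neg hk0, if_neg hk0, if_neg hkn, if_neg hkn, ha',
        if_neg (by omega)]
end
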